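/- arXiv:2604.21187 — 10 statements merged into one kernel-verified Lean document; each statement's English description precedes it below -/
import Mathlib

section
/- For all t ≥ 4, there exists a doubly saturated R(4,t)-good graph on 6t−11 vertices; specifically, the circulant graph on n = 6t−11 vertices with distance set {t−2} ∪ [2t−3, 3t−6] is doubly saturated R(4,t)-good. -/
/-!
Write `t = a + 2`: the graph lives on `ℤ/(6a+1)` and joins points at cyclic distance `a` or in
`[2a+1, 3a]`. A `K₄` is excluded by looking at the gaps between four points in cyclic order. An
independent set has all pairwise distances in `[1, 2a] \ {a}`; since `3 · 2a < 6a + 1` it lies in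
an arc of length `2a`, and having no two points at distance `a` it has at most `a + 1` points.
Both saturation properties are witnessed by translates of explicit sets of integers: through a
non-edge at distance `d ≤ 2a` a `4`-clique, and through an edge at distance `e` an independent set
of size `a + 2` once that edge is deleted.
-/

/-- The cyclic distance ‖x‖ = min(x mod n, n − (x mod n)) for x ∈ ℤ/nℤ. -/
def cyclicDist (n : ℕ) (x : ZMod n) : ℕ := min x.val (n - x.val)

/-- The circulant graph on `ZMod n` with distance set `S`: `x ~ y` iff `‖x - y‖ ∈ S`. -/
def circ (n : ℕ) (S : Set ℕ) : SimpleGraph (ZMod n) :=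
  SimpleGraph.fromRel (fun x y => cyclicDist n (x - y) ∈ S)

/-- `G` is `R(s,t)`-good: no clique of size `s` and no independent set of size `t`. -/
def RGood {V : Type*} (s t : ℕ) (G : SimpleGraph V) : Prop :=
  G.CliqueFree s ∧ Gᶜ.CliqueFree t

/-- `G` is doubly saturated `R(s,t)`-good. -/
def DoublySaturated {V : Type*} (s t : ℕ) (G : SimpleGraph V) : Prop :=
  RGood s t G ∧
  (∀ u v : V, u ≠ v → ¬ G.Adj u v → ¬ (G ⊔ SimpleGraph.edge u v).CliqueFree s) ∧
  (∀ u v : V, G.Adj u v → ¬ ((G.deleteEdges {s(u, v)})ᶜ.CliqueFree t)) ∧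
  G ≠ ⊤ ∧ Gᶜ ≠ ⊤

open SimpleGraph

section Circulant

variable {n : ℕ}

lemma cyclicDist_neg [NeZero n] (x : ZMod n) : cyclicDist n (-x) = cyclicDist n x := by
  unfold cyclicDist
  rw [ZMod.neg_val]
  split_ifs with hx
  · simp [hx]
  · have := ZMod.val_lt x
    omega

lemma cyclicDist_pos [NeZero n] {x : ZMod n} (hx : x ≠ 0) : 0 < cyclicDist n x := by
  have := ZMod.val_lt x
  have := (ZMod.val_pos (n := n)).mpr hx
  unfold cyclicDist
  omega

lemma cyclicDist_le_half (x : ZMod n) : cyclicDist n x ≤ n / 2 := by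
  unfold cyclicDist
  omega

lemma cyclicDist_eq_val_or_eq_val_neg [NeZero n] (x : ZMod n) :
    cyclicDist n x = x.val ∨ cyclicDist n x = (-x).val := by
  unfold cyclicDist
  rw [ZMod.neg_val]
  split_ifs with hx
  · simp [hx]
  · omega

lemma circ_adj [NeZero n] {S : Set ℕ} {x y : ZMod n} :
    (circ n S).Adj x y ↔ x ≠ y ∧ cyclicDist n (x - y) ∈ S := by
  rw [circ, fromRel_adj, ← neg_sub x y, cyclicDist_neg, or_self]

lemma add_natCast_ne (p : ZMod n) {k l : ℕ} (hk : k < n) (hl : l < n) (hkl : k ≠ l) :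
    p + (k : ZMod n) ≠ p + l := fun h => by
  have := congrArg ZMod.val (add_left_cancel h)
  rw [ZMod.val_cast_of_lt hk, ZMod.val_cast_of_lt hl] at this
  exact hkl this

lemma circ_adj_add_natCast [NeZero n] {S : Set ℕ} (p : ZMod n) {k l : ℕ} (hkl : k < l)
    (hl : l < n) :
    (circ n S).Adj (p + k) (p + l) ↔ min (l - k) (n - (l - k)) ∈ S := by
  have hsub : (p + k) - (p + l) = -((l - k : ℕ) : ZMod n) := by
    rw [Nat.cast_sub hkl.le]
    ring
  rw [circ_adj, hsub, cyclicDist_neg, cyclicDist, ZMod.val_cast_of_lt (by omega)]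
  exact and_iff_right (add_natCast_ne p (hkl.trans hl) hl hkl.ne)

lemma exists_sym2_eq_add_cyclicDist [NeZero n] (u v : ZMod n) :
    ∃ p : ZMod n, s(u, v) = s(p, p + (cyclicDist n (u - v) : ZMod n)) := by
  rcases cyclicDist_eq_val_or_eq_val_neg (u - v) with h | h
  · refine ⟨v, ?_⟩
    rw [h, ZMod.natCast_zmod_val, add_sub_cancel, Sym2.eq_swap]
  · refine ⟨u, ?_⟩
    rw [h, ZMod.natCast_zmod_val, neg_sub, add_sub_cancel]

/-- Measured from `x₀ - m`, all points of `T` lie in `[0, 2 m]`; the first of them is `c`, and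
`3 m < n` leaves no room for `x - c` to wrap around. -/
lemma exists_forall_val_sub_le [NeZero n] {m : ℕ} (hm : 3 * m < n) {T : Finset (ZMod n)}
    (hT : T.Nonempty) (hclose : ∀ x ∈ T, ∀ y ∈ T, cyclicDist n (x - y) ≤ m) :
    ∃ c ∈ T, ∀ x ∈ T, (x - c).val ≤ m := by
  obtain ⟨x₀, hx₀⟩ := hT
  set w : ZMod n → ℕ := fun x => (x - x₀ + m).val with hw
  have hmval : (m : ZMod n).val = m := ZMod.val_cast_of_lt (by omega)
  have hw_le : ∀ x ∈ T, w x ≤ 2 * m := fun x hx => by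
    have hx := hclose x hx x₀ hx₀
    have := ZMod.val_lt (x - x₀)
    unfold cyclicDist at hx
    rcases lt_or_ge ((x - x₀).val + (m : ZMod n).val) n with h | h
    · simp only [hw, ZMod.val_add_of_lt h, hmval] at h ⊢
      omega
    · simp only [hw, ZMod.val_add_of_le h, hmval] at h ⊢
      omega
  obtain ⟨c, hc, hmin⟩ := T.exists_min_image w ⟨x₀, hx₀⟩
  refine ⟨c, hc, fun x hx => ?_⟩
  have hval : (x - c).val = w x - w c := by
    rw [← ZMod.val_sub (hmin x hx)]
    congr 1
    ring
  have hxc := hclose x hx c hc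
  have := hw_le x hx
  unfold cyclicDist at hxc
  omega

lemma card_image_val_sub [NeZero n] (c : ZMod n) (T : Finset (ZMod n)) :
    (T.image fun x => (x - c).val).card = T.card :=
  Finset.card_image_of_injective _ (ZMod.val_injective n |>.comp (sub_left_injective (b := c)))

lemma image_val_sub_pairwise [NeZero n] (c : ZMod n) {T : Finset (ZMod n)} {P : ℕ → Prop}
    (hT : ∀ x ∈ T, ∀ y ∈ T, x ≠ y → P (cyclicDist n (x - y))) :
    ∀ k ∈ T.image (fun x => (x - c).val), ∀ l ∈ T.image (fun x => (x - c).val), k < l →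
      P (min (l - k) (n - (l - k))) := by
  simp only [Finset.mem_image]
  rintro _ ⟨x, hx, rfl⟩ _ ⟨y, hy, rfl⟩ hxy
  have hval : (y - x).val = (y - c).val - (x - c).val := by
    rw [← ZMod.val_sub hxy.le]
    congr 1
    ring
  have hne : y ≠ x := by
    rintro rfl
    exact lt_irrefl _ hxy
  simpa only [cyclicDist, hval] using hT y hy x hx hne

lemma image_val_sub_lt [NeZero n] (c : ZMod n) (T : Finset (ZMod n)) :
    ∀ k ∈ T.image (fun x => (x - c).val), k < n := by
  simp only [Finset.mem_image]
  rintro _ ⟨x, -, rfl⟩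
  exact ZMod.val_lt _

lemma not_cliqueFree_of_forall_adj_add_natCast {G : SimpleGraph (ZMod n)} (p : ZMod n)
    {A : Finset ℕ} (hA : ∀ k ∈ A, k < n)
    (hadj : ∀ k ∈ A, ∀ l ∈ A, k < l → G.Adj (p + k) (p + l)) :
    ¬ G.CliqueFree A.card := by
  have hinj : Set.InjOn (fun k : ℕ => p + (k : ZMod n)) A := fun k hk l hl h => by
    by_contra hkl
    exact add_natCast_ne p (hA k hk) (hA l hl) hkl h
  refine IsNClique.not_cliqueFree ⟨?_, Finset.card_image_of_injOn hinj⟩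
  simp only [Finset.coe_image]
  rintro _ ⟨k, hk, rfl⟩ _ ⟨l, hl, rfl⟩ hne
  rcases lt_trichotomy k l with h | rfl | h
  · exact hadj k hk l hl h
  · exact absurd rfl hne
  · exact (hadj l hl k hk h).symm

end Circulant

lemma ne_top_of_cliqueFree {V : Type*} [Fintype V] {G : SimpleGraph V} {m : ℕ}
    (h : G.CliqueFree m) (hm : m ≤ Fintype.card V) : G ≠ ⊤ := by
  rintro rfl
  obtain ⟨s, -, hs⟩ := Finset.exists_subset_card_eq (s := Finset.univ) (by simpa using hm)
  exact h s ⟨IsClique.top _, hs⟩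

lemma Finset.card_le_of_forall_sub_ne {A : Finset ℕ} {a : ℕ} (hA : ∀ k ∈ A, k ≤ 2 * a)
    (hsub : ∀ k ∈ A, ∀ l ∈ A, k < l → l - k ≠ a) : A.card ≤ a + 1 := by
  have hmaps : Set.MapsTo (fun k => if a < k then k - a else k) A (Finset.range (a + 1)) :=
    fun k hk => by
      have := hA k hk
      simp only [Finset.coe_range, Set.mem_Iio]
      split_ifs <;> omega
  have hinj : Set.InjOn (fun k => if a < k then k - a else k) A := fun k hk l hl h => by
    have hkl := hsub k hk l hl
    have hlk := hsub l hl k hk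
    simp only at h
    split_ifs at h <;> omega
  simpa using Finset.card_le_card_of_injOn _ hmaps hinj

def distSet (a : ℕ) : Set ℕ := {a} ∪ Set.Icc (2 * a + 1) (3 * a)

lemma mem_distSet {a k : ℕ} : k ∈ distSet a ↔ k = a ∨ 2 * a + 1 ≤ k ∧ k ≤ 3 * a := by
  simp [distSet]

/-- Four points in cyclic order cut the cycle into four gaps of length at least `a` summing to
`6 a + 1`; the only possibility is `a, a, a, 3 a + 1` up to rotation, and then two consecutive
gaps `a` span the distance `2 a ∉ distSet a`. -/
lemma cliqueFree_four_circ_distSet (a : ℕ) : (circ (6 * a + 1) (distSet a)).CliqueFree 4 := by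
  intro T hT
  set A := T.image fun x => (x - 0).val
  have hA := image_val_sub_pairwise 0 (P := (· ∈ distSet a))
    fun x hx y hy hxy => (circ_adj.mp (hT.1 hx hy hxy)).2
  have hcard : A.card = 4 := (card_image_val_sub 0 T).trans hT.2
  set e := A.orderEmbOfFin hcard
  have he : ∀ i j : Fin 4, i < j → min (e j - e i) (6 * a + 1 - (e j - e i)) ∈ distSet a :=
    fun i j hij => hA _ (A.orderEmbOfFin_mem hcard i) _ (A.orderEmbOfFin_mem hcard j)
      (e.strictMono hij)
  have hlt := image_val_sub_lt 0 T (e 3) (A.orderEmbOfFin_mem hcard 3)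
  have h01 := e.strictMono (show (0 : Fin 4) < 1 by decide)
  have h12 := e.strictMono (show (1 : Fin 4) < 2 by decide)
  have h23 := e.strictMono (show (2 : Fin 4) < 3 by decide)
  have := he 0 1 (by decide)
  have := he 0 2 (by decide)
  have := he 0 3 (by decide)
  have := he 1 2 (by decide)
  have := he 1 3 (by decide)
  have := he 2 3 (by decide)
  simp only [mem_distSet] at *
  omega

lemma compl_cliqueFree_circ_distSet (a : ℕ) :
    (circ (6 * a + 1) (distSet a))ᶜ.CliqueFree (a + 2) := by
  intro T hT
  have hind : ∀ x ∈ T, ∀ y ∈ T, x ≠ y → cyclicDist (6 * a + 1) (x - y) ∉ distSet a :=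
    fun x hx y hy hxy h => ((compl_adj _ _ _).mp (hT.1 hx hy hxy)).2 (circ_adj.mpr ⟨hxy, h⟩)
  have hclose : ∀ x ∈ T, ∀ y ∈ T, cyclicDist (6 * a + 1) (x - y) ≤ 2 * a := fun x hx y hy => by
    by_cases hxy : x = y
    · simp [hxy, cyclicDist]
    · have := hind x hx y hy hxy
      have := cyclicDist_le_half (x - y)
      simp only [mem_distSet] at *
      omega
  obtain ⟨c, -, hc⟩ :=
    exists_forall_val_sub_le (by omega) (Finset.card_pos.mp (by rw [hT.2]; omega)) hclose
  have hA := image_val_sub_pairwise c (P := (· ∉ distSet a)) hind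
  have hle : (T.image fun x => (x - c).val).card ≤ a + 1 := by
    refine Finset.card_le_of_forall_sub_ne (by simpa using hc) fun k hk l hl hkl h => ?_
    refine hA k hk l hl hkl ?_
    simp only [mem_distSet]
    omega
  rw [card_image_val_sub, hT.2] at hle
  omega

lemma exists_clique_pattern {a d : ℕ} (hd0 : 0 < d) (hd : d ≤ 2 * a) (hda : d ≠ a) :
    ∃ A : Finset ℕ, A.card = 4 ∧ (∀ k ∈ A, k < 6 * a + 1) ∧
      ∀ k ∈ A, ∀ l ∈ A, k < l → ¬(k = 0 ∧ l = d) →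
        min (l - k) (6 * a + 1 - (l - k)) ∈ distSet a := by
  rcases hda.lt_or_gt with h | h
  · refine ⟨{0, d, 2 * a + 1 + d, 3 * a + 1 + d}, ?_, ?_, ?_⟩
    · rw [Finset.card_insert_of_notMem, Finset.card_insert_of_notMem, Finset.card_pair] <;>
        simp <;> omega
    · simp only [Finset.mem_insert, Finset.mem_singleton]
      omega
    · simp only [Finset.mem_insert, Finset.mem_singleton]
      rintro k (rfl | rfl | rfl | rfl) l (rfl | rfl | rfl | rfl) hkl hne <;>
        simp only [mem_distSet] <;> omega
  · refine ⟨{0, d, a + d, 5 * a + 1}, ?_, ?_, ?_⟩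
    · rw [Finset.card_insert_of_notMem, Finset.card_insert_of_notMem, Finset.card_pair] <;>
        simp <;> omega
    · simp only [Finset.mem_insert, Finset.mem_singleton]
      omega
    · simp only [Finset.mem_insert, Finset.mem_singleton]
      rintro k (rfl | rfl | rfl | rfl) l (rfl | rfl | rfl | rfl) hkl hne <;>
        simp only [mem_distSet] <;> omega

lemma exists_indep_pattern {a e : ℕ} (ha : 2 ≤ a) (he : e ∈ distSet a) :
    ∃ A : Finset ℕ, A.card = a + 2 ∧ (∀ k ∈ A, k < 6 * a + 1) ∧
      ∀ k ∈ A, ∀ l ∈ A, k < l → ¬(k = 0 ∧ l = e) →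
        min (l - k) (6 * a + 1 - (l - k)) ∉ distSet a := by
  rcases mem_distSet.mp he with he | ⟨he, he'⟩
  · subst e
    refine ⟨insert 0 (insert (6 * a) (Finset.Ico a (2 * a))), ?_, ?_, ?_⟩
    · rw [Finset.card_insert_of_notMem, Finset.card_insert_of_notMem, Nat.card_Ico] <;>
        simp <;> omega
    · simp only [Finset.mem_insert, Finset.mem_Ico]
      omega
    · simp only [Finset.mem_insert, Finset.mem_Ico]
      rintro k (rfl | rfl | hk) l (rfl | rfl | hl) hkl hne <;> simp only [mem_distSet] <;> omega
  rcases he'.lt_or_eq with he' | rfl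
  · obtain ⟨f, rfl⟩ : ∃ f, e = 2 * a + 1 + f := ⟨e - (2 * a + 1), by omega⟩
    refine ⟨insert 0 (insert (2 * a) (insert (2 * a + 1 + f) ((Finset.Ioc f (a + f)).erase a))),
      ?_, ?_, ?_⟩
    · rw [Finset.card_insert_of_notMem, Finset.card_insert_of_notMem,
        Finset.card_insert_of_notMem, Finset.card_erase_of_mem, Nat.card_Ioc] <;>
        simp <;> omega
    · simp only [Finset.mem_insert, Finset.mem_erase, Finset.mem_Ioc]
      omega
    · simp only [Finset.mem_insert, Finset.mem_erase, Finset.mem_Ioc]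
      rintro k (rfl | rfl | rfl | hk) l (rfl | rfl | rfl | hl) hkl hne <;>
        simp only [mem_distSet] <;> omega
  · refine ⟨insert 0 (insert (3 * a) (Finset.Icc (4 * a + 1) (5 * a))), ?_, ?_, ?_⟩
    · rw [Finset.card_insert_of_notMem, Finset.card_insert_of_notMem, Nat.card_Icc] <;>
        simp <;> omega
    · simp only [Finset.mem_insert, Finset.mem_Icc]
      omega
    · simp only [Finset.mem_insert, Finset.mem_Icc]
      rintro k (rfl | rfl | hk) l (rfl | rfl | hl) hkl hne <;> simp only [mem_distSet] <;> omega

lemma not_cliqueFree_sup_edge_of_not_adj {a : ℕ} {u v : ZMod (6 * a + 1)} (huv : u ≠ v)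
    (h : ¬ (circ (6 * a + 1) (distSet a)).Adj u v) :
    ¬ (circ (6 * a + 1) (distSet a) ⊔ edge u v).CliqueFree 4 := by
  obtain ⟨p, hp⟩ := exists_sym2_eq_add_cyclicDist u v
  set d := cyclicDist (6 * a + 1) (u - v)
  have hd0 : 0 < d := cyclicDist_pos (sub_ne_zero.mpr huv)
  have hd := cyclicDist_le_half (u - v)
  have hdS : d ∉ distSet a := fun hdS => h (circ_adj.mpr ⟨huv, hdS⟩)
  rw [mem_distSet] at hdS
  obtain ⟨A, hcard, hlt, hS⟩ := exists_clique_pattern (a := a) hd0 (by omega) (by omega)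
  rw [edge, hp, ← hcard]
  refine not_cliqueFree_of_forall_adj_add_natCast p hlt fun k hk l hl hkl => ?_
  by_cases hkl' : k = 0 ∧ l = d
  · obtain ⟨rfl, rfl⟩ := hkl'
    exact Or.inr ((fromEdgeSet_adj _).mpr
      ⟨by simp, add_natCast_ne p (hlt 0 hk) (hlt _ hl) hkl.ne⟩)
  · exact Or.inl ((circ_adj_add_natCast p hkl (hlt l hl)).mpr (hS k hk l hl hkl hkl'))

lemma not_cliqueFree_compl_deleteEdges_of_adj {a : ℕ} (ha : 2 ≤ a) {u v : ZMod (6 * a + 1)}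
    (h : (circ (6 * a + 1) (distSet a)).Adj u v) :
    ¬ ((circ (6 * a + 1) (distSet a)).deleteEdges {s(u, v)})ᶜ.CliqueFree (a + 2) := by
  obtain ⟨p, hp⟩ := exists_sym2_eq_add_cyclicDist u v
  obtain ⟨A, hcard, hlt, hS⟩ := exists_indep_pattern ha (circ_adj.mp h).2
  rw [hp, ← hcard]
  refine not_cliqueFree_of_forall_adj_add_natCast p hlt fun k hk l hl hkl => ?_
  refine (compl_adj _ _ _).mpr ⟨add_natCast_ne p (hlt k hk) (hlt l hl) hkl.ne, ?_⟩
  rw [deleteEdges_adj, not_and_or, not_not]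
  by_cases hkl' : k = 0 ∧ l = cyclicDist (6 * a + 1) (u - v)
  · obtain ⟨rfl, rfl⟩ := hkl'
    simp
  · exact Or.inl fun h => hS k hk l hl hkl hkl' ((circ_adj_add_natCast p hkl (hlt l hl)).mp h)
theorem stmt_0 (t : ℕ) (ht : 4 ≤ t) :
    DoublySaturated 4 t (circ (6 * t - 11) ({t - 2} ∪ Set.Icc (2 * t - 3) (3 * t - 6))) := by
  obtain ⟨a, rfl⟩ : ∃ a, t = a + 2 := ⟨t - 2, by omega⟩
  rw [show 6 * (a + 2) - 11 = 6 * a + 1 by omega, show a + 2 - 2 = a by omega,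
    show 2 * (a + 2) - 3 = 2 * a + 1 by omega, show 3 * (a + 2) - 6 = 3 * a by omega]
  change DoublySaturated 4 (a + 2) (circ (6 * a + 1) (distSet a))
  have hgood : RGood 4 (a + 2) (circ (6 * a + 1) (distSet a)) :=
    ⟨cliqueFree_four_circ_distSet a, compl_cliqueFree_circ_distSet a⟩
  refine ⟨hgood, fun u v huv h => not_cliqueFree_sup_edge_of_not_adj huv h,
    fun u v h => not_cliqueFree_compl_deleteEdges_of_adj (by omega) h,
    ne_top_of_cliqueFree hgood.1 ?_, ne_top_of_cliqueFree hgood.2 ?_⟩ <;>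
  simp only [ZMod.card] <;> omega
end

section
/- Let t ≥ 4, m = t−2, n = 6m+1, and let G be the circulant graph on ℤ/nℤ with distance set {m} ∪ [2m+1, 3m]. Then G contains no independent set of size t = m+2. -/
/-!
Cyclic distances in `ℤ/(6m+1)` are at most `3m`, so any two vertices of an independent set are at
cyclic distance in `[1, 2m] \ {m}`. Since `3 · 2m < 6m + 1`, pairwise cyclic distance at most `2m`
forces the set into an arc `a, a + 1, …, a + 2m`. Inside the arc the offsets from `a` avoid the
difference `m`; the offsets `r, r + m` (`r < m`) pair up, leaving `2m` alone, so there are at most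
`m + 1` of them.
-/

open Finset

theorem Finset.card_le_of_subset_range_two_mul {m : ℕ} {U : Finset ℕ} (hU : U ⊆ range (2 * m))
    (hgap : ∀ x ∈ U, ∀ y ∈ U, x < y → y - x ≠ m) : #U ≤ m := by
  have hdiv : ∀ x ∈ U, x / m < 2 ∧ x = m * (x / m) + x % m := fun x hx =>
    ⟨Nat.div_lt_of_lt_mul (by rw [mul_comm]; exact mem_range.1 (hU hx)),
      (Nat.div_add_mod x m).symm⟩
  -- a residue class mod `m` meets `range (2 * m)` in two points at distance `m`
  calc #U ≤ #(range m) := by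
        refine card_le_card_of_injOn (· % m) (fun x hx => ?_) fun x hx y hy hxy => ?_
        · exact mem_range.2 (Nat.mod_lt x (by have := mem_range.1 (hU hx); omega))
        · obtain ⟨hx2, hx'⟩ := hdiv x hx
          obtain ⟨hy2, hy'⟩ := hdiv y hy
          have := hgap x hx y hy
          have := hgap y hy x hx
          simp only at hxy
          interval_cases (x / m) <;> interval_cases (y / m) <;> omega
    _ = m := card_range m

theorem Finset.card_le_of_subset_range_two_mul_add_one {m : ℕ} {U : Finset ℕ}
    (hU : U ⊆ range (2 * m + 1)) (hgap : ∀ x ∈ U, ∀ y ∈ U, x < y → y - x ≠ m) :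
    #U ≤ m + 1 := by
  have : #(U.erase (2 * m)) ≤ m := by
    refine card_le_of_subset_range_two_mul (fun x hx => ?_) fun x hx y hy => ?_
    · have := mem_range.1 (hU (mem_of_mem_erase hx))
      have := ne_of_mem_erase hx
      exact mem_range.2 (by omega)
    · exact hgap x (mem_of_mem_erase hx) y (mem_of_mem_erase hy)
  have := pred_card_le_card_erase (s := U) (a := 2 * m)
  omega

namespace ZMod

variable {n : ℕ} [NeZero n]

theorem val_add_eq_or (x y : ZMod n) :
    (x + y).val = x.val + y.val ∨ (x + y).val + n = x.val + y.val := by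
  rcases lt_or_ge (x.val + y.val) n with h | h
  · exact .inl (val_add_of_lt h)
  · exact .inr (val_add_val_of_le h).symm

theorem exists_forall_val_sub_le {d : ℕ} (hd : 3 * d < n) {s : Finset (ZMod n)} (hs : s.Nonempty)
    (hdist : (s : Set (ZMod n)).Pairwise fun u v => cyclicDist n (u - v) ≤ d) :
    ∃ a ∈ s, ∀ u ∈ s, (u - a).val ≤ d := by
  obtain ⟨a, ha⟩ := hs
  have hdist_le : ∀ u ∈ s, ∀ v ∈ s, min (u - v).val (n - (u - v).val) ≤ d := by
    intro u hu v hv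
    rcases eq_or_ne u v with rfl | huv
    · simp
    · exact hdist hu hv huv
  by_cases hnear : ∀ u ∈ s, (u - a).val ≤ d
  · exact ⟨a, ha, hnear⟩
  -- the arc starts at the far point that comes first after `a`
  obtain ⟨b, hb, hbmin⟩ := (s.filter fun u => d < (u - a).val).exists_min_image
    (fun u => (u - a).val) (by simpa [Finset.Nonempty] using hnear)
  rw [mem_filter] at hb
  refine ⟨b, hb.1, fun u hu => ?_⟩
  have hsum := sub_add_sub_cancel u b a ▸ val_add_eq_or (u - b) (b - a)
  have hub := hdist_le u hu b hb.1
  have hba := hdist_le b hb.1 a ha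
  have := val_lt (u - b)
  have := val_lt (u - a)
  have := val_lt (b - a)
  by_cases hu' : d < (u - a).val
  · have := hbmin u (mem_filter.2 ⟨hu, hu'⟩)
    omega
  · omega

theorem card_le_of_forall_val_sub_le {m : ℕ} {s : Finset (ZMod n)} {a : ZMod n}
    (ha : ∀ u ∈ s, (u - a).val ≤ 2 * m)
    (hgap : (s : Set (ZMod n)).Pairwise fun u v => (u - v).val ≠ m) : #s ≤ m + 1 := by
  have hinj : Set.InjOn (fun u => (u - a).val) s := fun u _ v _ h =>
    sub_left_injective (val_injective n h)
  rw [← card_image_of_injOn hinj]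
  refine card_le_of_subset_range_two_mul_add_one (fun x hx => ?_) fun x hx y hy hxy => ?_
  · obtain ⟨u, hu, rfl⟩ := mem_image.1 hx
    exact mem_range.2 (Nat.lt_succ_of_le (ha u hu))
  · obtain ⟨u, hu, rfl⟩ := mem_image.1 hx
    obtain ⟨v, hv, rfl⟩ := mem_image.1 hy
    have hvu : (v - u).val = (v - a).val - (u - a).val := by
      rw [← sub_sub_sub_cancel_right v u a, val_sub hxy.le]
    exact hvu ▸ hgap hv hu (ne_of_apply_ne (fun w => (w - a).val) hxy.ne')

end ZMod

theorem cyclicDist_notMem_of_compl_circ_adj {n : ℕ} {S : Set ℕ} {u v : ZMod n}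
    (h : (circ n S)ᶜ.Adj u v) : cyclicDist n (u - v) ∉ S := by
  rw [SimpleGraph.compl_adj, circ, SimpleGraph.fromRel_adj] at h
  tauto

theorem cyclicDist_le_and_val_ne {m : ℕ} {x : ZMod (6 * m + 1)}
    (hx : cyclicDist (6 * m + 1) x ∉ ({m} ∪ Set.Icc (2 * m + 1) (3 * m))) :
    cyclicDist (6 * m + 1) x ≤ 2 * m ∧ x.val ≠ m := by
  have := x.val_lt
  simp only [cyclicDist, Set.mem_union, Set.mem_singleton_iff, Set.mem_Icc, not_or,
    not_and] at hx ⊢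
  omega

theorem stmt_2_general (m n : ℕ) (hn : n = 6 * m + 1) :
    (circ n ({m} ∪ Set.Icc (2 * m + 1) (3 * m)))ᶜ.CliqueFree (m + 2) := by
  subst hn
  rintro s ⟨hs, hcard⟩
  have hgap := hs.imp fun u v huv =>
    cyclicDist_le_and_val_ne (cyclicDist_notMem_of_compl_circ_adj huv)
  obtain ⟨a, -, ha⟩ := ZMod.exists_forall_val_sub_le (by omega) (s.card_pos.1 (by omega))
    (hgap.imp fun _ _ h => h.1)
  have := ZMod.card_le_of_forall_val_sub_le ha (hgap.imp fun _ _ h => h.2)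
  omega

theorem stmt_2 (t m n : ℕ) (ht : 4 ≤ t) (hm : m = t - 2) (hn : n = 6 * m + 1) :
    (circ n ({m} ∪ Set.Icc (2 * m + 1) (3 * m)))ᶜ.CliqueFree (m + 2) :=
  stmt_2_general m n hn
end

section
/- Let t ≥ 4, m = t−2, n = 6m+1, and let G be the circulant graph on ℤ/nℤ with distance set {m} ∪ [2m+1, 3m]. For every pair of non-adjacent distinct vertices u, v of G, the graph obtained from G by adding the edge {u,v} contains a clique of size 4. -/
lemma key_clique (m n : ℕ) (hm : 2 ≤ m) (hn : n = 6*m+1)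
    (u v : ZMod n) (d a b : ℕ)
    (hd : u = v + (d : ZMod n))
    (hd1 : 1 ≤ d) (hda : d < a) (hab : a < b) (hbn : b < n)
    (N1 : min a (n-a) ∈ ({m} ∪ Set.Icc (2*m+1) (3*m) : Set ℕ))
    (N2 : min b (n-b) ∈ ({m} ∪ Set.Icc (2*m+1) (3*m) : Set ℕ))
    (N3 : min (b-a) (n-(b-a)) ∈ ({m} ∪ Set.Icc (2*m+1) (3*m) : Set ℕ))
    (N4 : min (a-d) (n-(a-d)) ∈ ({m} ∪ Set.Icc (2*m+1) (3*m) : Set ℕ))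
    (N5 : min (b-d) (n-(b-d)) ∈ ({m} ∪ Set.Icc (2*m+1) (3*m) : Set ℕ)) :
    ¬ ((circ n ({m} ∪ Set.Icc (2*m+1) (3*m))) ⊔ SimpleGraph.edge u v).CliqueFree 4 := by
  haveI : NeZero n := ⟨by omega⟩
  set S : Set ℕ := {m} ∪ Set.Icc (2*m+1) (3*m) with hS
  have hne0 : ∀ k : ℕ, 0 < k → k < n → ((k : ℕ) : ZMod n) ≠ 0 := by
    intro k h1 h2 h
    have hv : ((k : ℕ) : ZMod n).val = k := ZMod.val_cast_of_lt h2
    rw [h, ZMod.val_zero] at hv; omega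
  have adjG : ∀ (x : ZMod n) (k : ℕ), 0 < k → k < n → min k (n-k) ∈ S →
      (circ n S).Adj x (x + (k : ZMod n)) := by
    intro x k h1 h2 hSk
    rw [circ, SimpleGraph.fromRel_adj]
    refine ⟨fun h => hne0 k h1 h2 (add_eq_left.mp h.symm), Or.inr ?_⟩
    have e : (x + (k : ZMod n)) - x = (k : ZMod n) := by ring
    rw [e]
    simpa [cyclicDist, ZMod.val_cast_of_lt h2] using hSk
  -- the six adjacency facts
  have huv : u ≠ v := by
    rw [hd]
    intro h
    exact hne0 d hd1 (by omega) (add_eq_left.mp h)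
  have h_va : (circ n S).Adj v (v + (a : ZMod n)) := adjG v a (by omega) (by omega) N1
  have h_vb : (circ n S).Adj v (v + (b : ZMod n)) := adjG v b (by omega) (by omega) N2
  have h_ab : (circ n S).Adj (v + (a : ZMod n)) (v + (b : ZMod n)) := by
    have e : v + (b : ZMod n) = (v + (a : ZMod n)) + ((b - a : ℕ) : ZMod n) := by
      push_cast [Nat.cast_sub hab.le]; ring
    have := adjG (v + (a : ZMod n)) (b - a) (by omega) (by omega) N3
    rwa [← e] at this
  have h_ua : (circ n S).Adj u (v + (a : ZMod n)) := by
    have e : v + (a : ZMod n) = u + ((a - d : ℕ) : ZMod n) := by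
      rw [hd]; push_cast [Nat.cast_sub hda.le]; ring
    have := adjG u (a - d) (by omega) (by omega) N4
    rwa [← e] at this
  have h_ub : (circ n S).Adj u (v + (b : ZMod n)) := by
    have e : v + (b : ZMod n) = u + ((b - d : ℕ) : ZMod n) := by
      rw [hd]; push_cast [Nat.cast_sub (by omega : d ≤ b)]; ring
    have := adjG u (b - d) (by omega) (by omega) N5
    rwa [← e] at this
  set G' := (circ n S) ⊔ SimpleGraph.edge u v with hG'
  have g_uv : G'.Adj u v := Or.inr (by rw [SimpleGraph.edge_adj]; exact ⟨Or.inl ⟨rfl, rfl⟩, huv⟩)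
  have g_va : G'.Adj v (v + (a : ZMod n)) := Or.inl h_va
  have g_vb : G'.Adj v (v + (b : ZMod n)) := Or.inl h_vb
  have g_ab : G'.Adj (v + (a : ZMod n)) (v + (b : ZMod n)) := Or.inl h_ab
  have g_ua : G'.Adj u (v + (a : ZMod n)) := Or.inl h_ua
  have g_ub : G'.Adj u (v + (b : ZMod n)) := Or.inl h_ub
  intro hCF
  refine hCF {u, v, v + (a : ZMod n), v + (b : ZMod n)} ⟨?_, ?_⟩
  · intro x hx y hy hne
    simp only [Finset.coe_insert, Set.mem_insert_iff, Finset.coe_singleton,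
      Set.mem_singleton_iff] at hx hy
    rcases hx with rfl | rfl | rfl | rfl <;> rcases hy with rfl | rfl | rfl | rfl <;>
      first
        | exact absurd rfl hne
        | assumption
        | exact g_uv.symm
        | exact g_va.symm
        | exact g_vb.symm
        | exact g_ab.symm
        | exact g_ua.symm
        | exact g_ub.symm
  · rw [Finset.card_insert_of_notMem (by simp [huv, g_ua.ne, g_ub.ne]),
      Finset.card_insert_of_notMem (by simp [g_va.ne, g_vb.ne]),
      Finset.card_insert_of_notMem (by simp [g_ab.ne]),
      Finset.card_singleton]

theorem stmt_3 (t m n : ℕ) (ht : 4 ≤ t) (hm : m = t - 2) (hn : n = 6 * m + 1)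
    (u v : ZMod n) (huv : u ≠ v)
    (hadj : ¬ (circ n ({m} ∪ Set.Icc (2 * m + 1) (3 * m))).Adj u v) :
    ¬ ((circ n ({m} ∪ Set.Icc (2 * m + 1) (3 * m))) ⊔ SimpleGraph.edge u v).CliqueFree 4 := by
  have hm2 : 2 ≤ m := by omega
  haveI : NeZero n := ⟨by omega⟩
  rw [circ, SimpleGraph.fromRel_adj] at hadj
  push_neg at hadj
  obtain ⟨h1, h2⟩ := hadj huv
  set w : ZMod n := u - v with hw
  have hw0 : w ≠ 0 := sub_ne_zero.mpr huv
  set d0 : ℕ := w.val with hd0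
  have hwc : ((d0 : ℕ) : ZMod n) = w := ZMod.natCast_rightInverse w
  have hd0n : d0 < n := ZMod.val_lt w
  have hd0p : 0 < d0 := by
    rcases Nat.eq_zero_or_pos d0 with h | h
    · exfalso; apply hw0; rw [← hwc, h, Nat.cast_zero]
    · exact h
  have hcd : cyclicDist n w = min d0 (n - d0) := rfl
  rw [hcd] at h1
  have hS1 : min d0 (n - d0) ∉ ({m} ∪ Set.Icc (2*m+1) (3*m) : Set ℕ) := h1
  have hSmem : ¬ (min d0 (n - d0) = m ∨ (2*m+1 ≤ min d0 (n - d0) ∧ min d0 (n - d0) ≤ 3*m)) := by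
    simpa [Set.mem_union, Set.mem_Icc] using hS1
  have hu : u = v + ((d0 : ℕ) : ZMod n) := by rw [hwc, hw]; ring
  have hmem : ∀ x : ℕ, (x = m ∨ (2*m+1 ≤ x ∧ x ≤ 3*m)) →
      x ∈ ({m} ∪ Set.Icc (2*m+1) (3*m) : Set ℕ) := by
    intro x hx; simpa [Set.mem_union, Set.mem_Icc] using hx
  by_cases hc : d0 ≤ 3*m
  · -- u = v + d0, d0 ∈ [1,m-1] ∪ [m+1,2m]
    have hd' : d0 ≠ m ∧ ¬ (2*m+1 ≤ d0 ∧ d0 ≤ 3*m) := by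
      constructor <;> intro h <;> apply hSmem <;> omega
    by_cases hsmall : d0 ≤ m - 1
    · exact key_clique m n hm2 hn u v d0 (2*m+1+d0) (3*m+1+d0)
        hu (by omega) (by omega) (by omega) (by omega)
        (hmem _ (by omega)) (hmem _ (by omega)) (hmem _ (by omega))
        (hmem _ (by omega)) (hmem _ (by omega))
    · have hrange : m + 1 ≤ d0 ∧ d0 ≤ 2*m := by omega
      exact key_clique m n hm2 hn u v d0 (m+d0) (5*m+1)
        hu (by omega) (by omega) (by omega) (by omega)
        (hmem _ (by omega)) (hmem _ (by omega)) (hmem _ (by omega))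
        (hmem _ (by omega)) (hmem _ (by omega))
  · -- swap u and v: v = u + (n - d0)
    set d1 : ℕ := n - d0 with hd1
    have hv : v = u + ((d1 : ℕ) : ZMod n) := by
      have e : ((d1 : ℕ) : ZMod n) = -(((d0 : ℕ) : ZMod n)) := by
        have : ((d1 : ℕ) : ZMod n) = ((n : ℕ) : ZMod n) - ((d0 : ℕ) : ZMod n) := by
          rw [← Nat.cast_sub (by omega : d0 ≤ n)]
        rw [this, ZMod.natCast_self]; ring
      rw [e, hwc, hw]; ring
    have hedge : SimpleGraph.edge u v = SimpleGraph.edge v u := by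
      ext a b; rw [SimpleGraph.edge_adj, SimpleGraph.edge_adj]; tauto
    rw [hedge]
    have hd' : d1 ≠ m ∧ ¬ (2*m+1 ≤ d1 ∧ d1 ≤ 3*m) := by
      constructor <;> intro h <;> apply hSmem <;> omega
    have hd1b : 1 ≤ d1 ∧ d1 ≤ 3*m := by omega
    by_cases hsmall : d1 ≤ m - 1
    · exact key_clique m n hm2 hn v u d1 (2*m+1+d1) (3*m+1+d1)
        hv (by omega) (by omega) (by omega) (by omega)
        (hmem _ (by omega)) (hmem _ (by omega)) (hmem _ (by omega))
        (hmem _ (by omega)) (hmem _ (by omega))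
    · have hrange : m + 1 ≤ d1 ∧ d1 ≤ 2*m := by omega
      exact key_clique m n hm2 hn v u d1 (m+d1) (5*m+1)
        hv (by omega) (by omega) (by omega) (by omega)
        (hmem _ (by omega)) (hmem _ (by omega)) (hmem _ (by omega))
        (hmem _ (by omega)) (hmem _ (by omega))
end

section
/- For all s, t ≥ 3, every doubly saturated R(s,t)-good graph has at least 2s + 2t − 7 vertices. -/
/-!
Since `Gᶜ` is doubly saturated `R(t,s)`-good, it suffices to show `deg v ≥ 2(s - 2)` for every
vertex `v`: then `n ≥ 1 + deg_G v + deg_{Gᶜ} v ≥ 1 + 2(s - 2) + 2(t - 2)`.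

Cliques inside `N(v)` have at most `s - 2` vertices, and by edge-addition saturation every
non-neighbour `u` of `v` has an `(s - 2)`-clique `F u ⊆ N(u) ∩ N(v)`. Hajnal's lemma for such a
family of maximum cliques of `N(v)` gives `|⋂ F u| + |⋃ F u| ≥ 2(s - 2)`. The intersection is
empty: a vertex `x` in it is adjacent to `v`, so by edge-deletion saturation `x` and `v` have a
common non-neighbour `w`, contradicting `x ∈ F w ⊆ N(w)`. Hence `|N(v)| ≥ |⋃ F u| ≥ 2(s - 2)`.
-/

open Finset SimpleGraph

namespace SimpleGraph

variable {V : Type*} {G : SimpleGraph V}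

lemma compl_deleteEdges_edge (G : SimpleGraph V) (u v : V) :
    (G.deleteEdges {s(u, v)})ᶜ = Gᶜ ⊔ edge u v := by
  ext x y
  simp only [compl_adj, deleteEdges_adj, sup_adj, edge_adj, Set.mem_singleton_iff, Sym2.eq_iff]
  tauto

lemma CliqueFree.card_lt_of_isClique_of_subset_neighborFinset {n : ℕ} [DecidableEq V] {v : V}
    [Fintype (G.neighborSet v)] (hG : G.CliqueFree n) {S : Finset V}
    (hS : G.IsClique (S : Set V)) (hSv : S ⊆ G.neighborFinset v) : #S + 1 < n := by
  by_contra! hle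
  refine hG.mono hle (insert v S) (IsNClique.insert ⟨hS, rfl⟩ fun w hw => ?_)
  exact (mem_neighborFinset G v w).1 (hSv hw)

variable [DecidableEq V] {M : Finset V} {b : ℕ}

lemma card_sdiff_le_card_sdiff_of_isNClique (hM : ∀ S ⊆ M, G.IsClique (S : Set V) → #S ≤ b)
    {S I U : Finset V} (hSM : S ⊆ M) (hS : G.IsNClique b S) (hIM : I ⊆ M)
    (hI : G.IsClique (I : Set V)) (hIU : ∀ x ∈ I, ∀ y ∈ U, x ≠ y → G.Adj x y) :
    #(I \ S) ≤ #(S \ U) := by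
  classical
  -- Trading `Y` for `I \ S` keeps a clique inside `M`, so `|I \ S| ≤ |Y|`; and `Y` misses `U`.
  set Y := {y ∈ S | ∃ x ∈ I \ S, ¬ G.Adj x y}
  have hYS : Y ⊆ S := filter_subset _ _
  have hYU : Y ⊆ S \ U := by
    intro y hy
    obtain ⟨hyS, x, hx, hxy⟩ := mem_filter.1 hy
    obtain ⟨hxI, hxS⟩ := mem_sdiff.1 hx
    exact mem_sdiff.2 ⟨hyS, fun hyU => hxy (hIU x hxI y hyU (ne_of_mem_of_not_mem hyS hxS).symm)⟩
  have hclique : G.IsClique ((S \ Y ∪ I \ S : Finset V) : Set V) := by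
    rw [coe_union, IsClique, Set.pairwise_union]
    refine ⟨hS.1.subset (by simp), hI.subset (by simp), fun y hy x hx _ => ?_⟩
    simp only [coe_sdiff, Set.mem_sdiff, mem_coe] at hx hy
    have hxy : G.Adj x y := by
      by_contra hnadj
      exact hy.2 (mem_filter.2 ⟨hy.1, x, mem_sdiff.2 hx, hnadj⟩)
    exact ⟨hxy.symm, hxy⟩
  have hcard := hM _ (union_subset (sdiff_subset.trans hSM) (sdiff_subset.trans hIM)) hclique
  rw [card_union_of_disjoint (disjoint_sdiff.mono_left sdiff_subset)] at hcard
  have := card_sdiff_add_card_eq_card hYS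
  have := card_le_card hYU
  have := hS.card_eq
  omega

/-- Hajnal's lemma, for cliques. -/
theorem two_mul_le_card_inf'_add_card_sup (hM : ∀ S ⊆ M, G.IsClique (S : Set V) → #S ≤ b)
    {ι : Type*} {N : Finset ι} (hN : N.Nonempty) {F : ι → Finset V}
    (hF : ∀ i ∈ N, F i ⊆ M ∧ G.IsNClique b (F i)) :
    2 * b ≤ #(N.inf' hN F) + #(N.sup F) := by
  induction hN using Nonempty.cons_induction with
  | singleton i =>
    simp only [inf'_singleton, (hF i (mem_singleton_self i)).2.card_eq, sup_singleton]
    omega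
  | cons i N hi hN ih =>
    obtain ⟨hSM, hS⟩ := hF i (mem_cons_self i N)
    have ih := ih fun j hj => hF j (mem_cons_of_mem hj)
    have ⟨j, hj⟩ := hN
    have hIj : N.inf' hN F ⊆ F j := inf'_le F hj
    have hIU : ∀ x ∈ N.inf' hN F, ∀ y ∈ N.sup F, x ≠ y → G.Adj x y := by
      intro x hx y hy hxy
      obtain ⟨k, hk, hyk⟩ := mem_sup.1 hy
      exact (hF k (mem_cons_of_mem hk)).2.1 (mem_coe.2 ((inf'_le F hk) hx)) (mem_coe.2 hyk) hxy
    have hexch := card_sdiff_le_card_sdiff_of_isNClique hM hSM hS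
      (hIj.trans (hF j (mem_cons_of_mem hj)).1) ((hF j (mem_cons_of_mem hj)).2.1.subset hIj) hIU
    have := card_inter_add_card_sdiff (N.inf' hN F) (F i)
    have := card_sdiff_add_card (F i) (N.sup F)
    rw [inf'_cons hN, sup_cons, inf_eq_inter, sup_eq_union, inter_comm]
    omega

end SimpleGraph

namespace DoublySaturated

variable {V : Type*} {s t : ℕ} {G : SimpleGraph V}

theorem compl (h : DoublySaturated s t G) : DoublySaturated t s Gᶜ := by
  obtain ⟨⟨hs, ht⟩, hadd, hdel, htop, hctop⟩ := h
  refine ⟨⟨ht, by rwa [compl_compl]⟩, fun u v hne huv => ?_, fun u v huv => ?_, hctop,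
    by rwa [compl_compl]⟩
  · rw [← compl_deleteEdges_edge]
    exact hdel u v (by simpa [hne] using huv)
  · rw [compl_deleteEdges_edge, compl_compl]
    exact hadd u v huv.ne ((compl_adj G u v).1 huv).2

theorem nontrivial (h : DoublySaturated s t G) : Nontrivial V := by
  by_contra hV
  rw [not_nontrivial_iff_subsingleton] at hV
  exact h.2.2.2.1 (Subsingleton.elim _ _)

theorem exists_isNClique_common_adj [DecidableEq V] (h : DoublySaturated s t G) {u v : V}
    (hne : u ≠ v) (huv : ¬ G.Adj u v) :
    ∃ C : Finset V, G.IsNClique (s - 2) C ∧ ∀ c ∈ C, G.Adj u c ∧ G.Adj v c := by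
  obtain ⟨K, hK⟩ := not_forall_not.1 (h.2.1 u v hne huv)
  have hu : u ∈ K := h.1.1.mem_of_sup_edge_isNClique hK
  have hv : v ∈ K := h.1.1.mem_of_sup_edge_isNClique (edge_comm .. ▸ hK)
  have hKu : G.IsNClique (s - 1) (K.erase u) := hK.erase_of_sup_edge_of_mem hu
  have hKv : G.IsNClique (s - 1) (K.erase v) := (edge_comm .. ▸ hK).erase_of_sup_edge_of_mem hv
  refine ⟨(K.erase u).erase v, hKu.erase_of_mem (mem_erase.2 ⟨hne.symm, hv⟩), fun c hc => ?_⟩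
  obtain ⟨hcv, hcu, hcK⟩ : c ≠ v ∧ c ≠ u ∧ c ∈ K := by simpa using hc
  exact ⟨hKv.1 (by simp [hu, hne]) (by simp [hcK, hcv]) hcu.symm,
    hKu.1 (by simp [hv, hne.symm]) (by simp [hcK, hcu]) hcv.symm⟩

theorem exists_common_adj (h : DoublySaturated s t G) (hs : 3 ≤ s) {u v : V} (hne : u ≠ v)
    (huv : ¬ G.Adj u v) : ∃ c, G.Adj u c ∧ G.Adj v c := by
  classical
  obtain ⟨C, hC, hCadj⟩ := h.exists_isNClique_common_adj hne huv
  obtain ⟨c, hc⟩ := card_pos.1 (by rw [hC.card_eq]; omega)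
  exact ⟨c, hCadj c hc⟩

theorem exists_adj (h : DoublySaturated s t G) (hs : 3 ≤ s) (v : V) : ∃ u, G.Adj v u := by
  have := h.nontrivial
  obtain ⟨w, hwv⟩ := exists_ne v
  by_cases hvw : G.Adj v w
  · exact ⟨w, hvw⟩
  · obtain ⟨c, hvc, -⟩ := h.exists_common_adj hs hwv.symm hvw
    exact ⟨c, hvc⟩

theorem two_mul_le_degree [Fintype V] [DecidableEq V] [DecidableRel G.Adj]
    (h : DoublySaturated s t G) (hs : 3 ≤ s) (ht : 3 ≤ t) (v : V) :
    2 * (s - 2) ≤ G.degree v := by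
  set N := Gᶜ.neighborFinset v
  have hN : N.Nonempty := by
    obtain ⟨u, hu⟩ := h.compl.exists_adj ht v
    exact ⟨u, (mem_neighborFinset _ _ _).2 hu⟩
  have hcommon : ∀ u ∈ N,
      ∃ C : Finset V, G.IsNClique (s - 2) C ∧ ∀ c ∈ C, G.Adj v c ∧ G.Adj u c := by
    intro u hu
    obtain ⟨hvu, hnadj⟩ := (compl_adj G v u).1 ((mem_neighborFinset _ _ _).1 hu)
    exact h.exists_isNClique_common_adj hvu hnadj
  choose! F hF hFadj using hcommon
  have hFM : ∀ u ∈ N, F u ⊆ G.neighborFinset v ∧ G.IsNClique (s - 2) (F u) :=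
    fun u hu => ⟨fun c hc => (mem_neighborFinset _ _ _).2 (hFadj u hu c hc).1, hF u hu⟩
  have hM : ∀ S ⊆ G.neighborFinset v, G.IsClique (S : Set V) → #S ≤ s - 2 := fun S hSv hS => by
    have := h.1.1.card_lt_of_isClique_of_subset_neighborFinset hS hSv
    omega
  have hinf : N.inf' hN F = ∅ := by
    refine eq_empty_of_forall_notMem fun x hx => ?_
    have hxF : ∀ u ∈ N, x ∈ F u := fun u hu => inf'_le F hu hx
    obtain ⟨u, hu⟩ := hN
    have hvx : G.Adj v x := (hFadj u hu x (hxF u hu)).1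
    obtain ⟨w, hvw, hxw⟩ := h.compl.exists_common_adj ht hvx.ne (by simp [hvx])
    have hwN : w ∈ N := (mem_neighborFinset _ _ _).2 hvw
    exact ((compl_adj G x w).1 hxw).2 (hFadj w hwN x (hxF w hwN)).2.symm
  calc 2 * (s - 2) ≤ #(N.inf' hN F) + #(N.sup F) := two_mul_le_card_inf'_add_card_sup hM hN hFM
    _ = #(N.sup F) := by rw [hinf, card_empty, zero_add]
    _ ≤ G.degree v := card_le_card (Finset.sup_le fun u hu => (hFM u hu).1)

end DoublySaturated

theorem stmt_5 (s t : ℕ) (hs : 3 ≤ s) (ht : 3 ≤ t)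
    {V : Type*} [Fintype V] (G : SimpleGraph V)
    (hG : DoublySaturated s t G) :
    2 * s + 2 * t - 7 ≤ Fintype.card V := by
  classical
  have := hG.nontrivial
  obtain ⟨v⟩ := (inferInstance : Nonempty V)
  have hdeg := hG.two_mul_le_degree hs ht v
  have hdeg_compl := hG.compl.two_mul_le_degree ht hs v
  have hsum := G.degree_compl v
  have hcard := Fintype.card_pos (α := V)
  omega
end

section
/- Hajnal's theorem: if G is a k-saturated graph (i.e., G contains no K_{k+1} subgraph, but adding any edge between two non-adjacent vertices of G yields a graph containing K_{k+1}), then either G has a vertex adjacent to every other vertex, or the minimum degree of G is at least 2(k−1). -/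
open Finset SimpleGraph

section Hajnal

variable {V : Type*} [Fintype V] {G : SimpleGraph V}

private lemma isClique_of (K : Finset V)
    (h : ∀ a ∈ K, ∀ b ∈ K, a ≠ b → G.Adj a b) : G.IsClique (K : Set V) :=
  fun a ha b hb hab => h a (Finset.mem_coe.1 ha) b (Finset.mem_coe.1 hb) hab

private lemma clique_card_le {k : ℕ} (hfree : G.CliqueFree (k+1)) {K : Finset V}
    (hK : G.IsClique (K : Set V)) : K.card ≤ k := by
  by_contra h
  push_neg at h
  obtain ⟨K', hsub, hcard⟩ := Finset.exists_subset_card_eq h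
  exact hfree K' ⟨hK.subset (Finset.coe_subset.2 hsub), hcard⟩

private lemma sat_clique {k : ℕ} (hfree : G.CliqueFree (k+1))
    (hsat : ∀ u v : V, u ≠ v → ¬ G.Adj u v → ¬ (G ⊔ SimpleGraph.edge u v).CliqueFree (k + 1))
    {u v : V} (hne : u ≠ v) (hnadj : ¬ G.Adj u v) :
    ∃ C : Finset V, G.IsClique (C : Set V) ∧ C.card = k - 1 ∧ u ∉ C ∧ v ∉ C ∧
      ∀ a ∈ C, G.Adj u a ∧ G.Adj v a := by
  classical
  have h := hsat u v hne hnadj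
  rw [SimpleGraph.CliqueFree] at h
  push_neg at h
  obtain ⟨t, ht⟩ := h
  have hsupadj : ∀ a ∈ t, ∀ b ∈ t, a ≠ b → (G ⊔ SimpleGraph.edge u v).Adj a b := by
    intro a ha b hb hab
    exact ht.1 (Finset.mem_coe.2 ha) (Finset.mem_coe.2 hb) hab
  have hut : u ∈ t := by
    by_contra hu
    refine hfree t ⟨isClique_of t ?_, ht.2⟩
    intro a ha b hb hab
    rcases (SimpleGraph.sup_adj _ _ _ _).1 (hsupadj a ha b hb hab) with h' | h'
    · exact h'
    · rw [SimpleGraph.edge_adj] at h'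
      rcases h'.1 with ⟨rfl, rfl⟩ | ⟨rfl, rfl⟩
      · exact absurd ha hu
      · exact absurd hb hu
  have hvt : v ∈ t := by
    by_contra hv
    refine hfree t ⟨isClique_of t ?_, ht.2⟩
    intro a ha b hb hab
    rcases (SimpleGraph.sup_adj _ _ _ _).1 (hsupadj a ha b hb hab) with h' | h'
    · exact h'
    · rw [SimpleGraph.edge_adj] at h'
      rcases h'.1 with ⟨rfl, rfl⟩ | ⟨rfl, rfl⟩
      · exact absurd hb hv
      · exact absurd ha hv
  refine ⟨(t.erase u).erase v, ?_, ?_, ?_, ?_, ?_⟩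
  · refine isClique_of _ ?_
    intro a ha b hb hab
    have haC := ha; have hbC := hb
    rw [Finset.mem_erase, Finset.mem_erase] at haC hbC
    rcases (SimpleGraph.sup_adj _ _ _ _).1
      (hsupadj a haC.2.2 b hbC.2.2 hab) with h' | h'
    · exact h'
    · rw [SimpleGraph.edge_adj] at h'
      rcases h'.1 with ⟨rfl, rfl⟩ | ⟨rfl, rfl⟩
      · exact absurd rfl haC.2.1
      · exact absurd rfl haC.1
  · have hv' : v ∈ t.erase u := Finset.mem_erase.2 ⟨hne.symm, hvt⟩
    rw [Finset.card_erase_of_mem hv', Finset.card_erase_of_mem hut, ht.2]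
    omega
  · intro h; exact (Finset.mem_erase.1 (Finset.mem_of_mem_erase h)).1 rfl
  · intro h; exact (Finset.mem_erase.1 h).1 rfl
  · intro a ha
    rw [Finset.mem_erase, Finset.mem_erase] at ha
    constructor
    · rcases (SimpleGraph.sup_adj _ _ _ _).1
        (hsupadj u hut a ha.2.2 (Ne.symm ha.2.1)) with h' | h'
      · exact h'
      · rw [SimpleGraph.edge_adj] at h'
        rcases h'.1 with ⟨_, rfl⟩ | ⟨rfl, rfl⟩
        · exact absurd rfl ha.1
        · exact absurd rfl hne
    · rcases (SimpleGraph.sup_adj _ _ _ _).1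
        (hsupadj v hvt a ha.2.2 (Ne.symm ha.1)) with h' | h'
      · exact h'
      · rw [SimpleGraph.edge_adj] at h'
        rcases h'.1 with ⟨rfl, _⟩ | ⟨_, rfl⟩
        · exact absurd rfl hne.symm
        · exact absurd rfl ha.2.1

private lemma helly [DecidableEq V] (m : ℕ) (P : V → Prop)
    (hhost : ∀ K : Finset V, (∀ a ∈ K, P a) → G.IsClique (K : Set V) → K.card ≤ m) :
    ∀ (S : Finset (Finset V)) (hne : S.Nonempty),
    (∀ s ∈ S, (∀ a ∈ s, P a) ∧ G.IsClique (s : Set V) ∧ s.card = m) →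
    2 * m ≤ (S.sup id).card + (S.inf' hne id).card := by
  classical
  intro S hne
  induction hne using Finset.Nonempty.cons_induction with
  | singleton s =>
    intro hS
    simp only [Finset.sup_singleton, Finset.inf'_singleton, id]
    have := (hS s (Finset.mem_singleton_self s)).2.2
    omega
  | cons s S hs hne IH =>
    intro hS
    have hS' : ∀ s' ∈ S, (∀ a ∈ s', P a) ∧ G.IsClique (s' : Set V) ∧ s'.card = m := by
      intro s' hs'; exact hS s' (Finset.mem_cons_of_mem hs')
    have IH' := IH hS'
    have hsmem : s ∈ Finset.cons s S hs := Finset.mem_cons_self s S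
    obtain ⟨hsP, hscl, hscard⟩ := hS s hsmem
    set U := S.sup id with hUdef
    set I := S.inf' hne id with hIdef
    obtain ⟨s₀, hs₀⟩ := id hne
    have hIs₀ : I ⊆ s₀ := Finset.inf'_le id hs₀
    -- the mixed clique
    have hmixP : ∀ a ∈ (s ∩ U) ∪ (I \ s), P a := by
      intro a ha
      rcases Finset.mem_union.1 ha with h | h
      · exact hsP a (Finset.mem_inter.1 h).1
      · exact (hS' s₀ hs₀).1 a (hIs₀ (Finset.mem_sdiff.1 h).1)
    have hmixcl : G.IsClique (((s ∩ U) ∪ (I \ s) : Finset V) : Set V) := by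
      refine isClique_of _ ?_
      intro a ha b hb hab
      rcases Finset.mem_union.1 ha with ha' | ha'
      · rcases Finset.mem_union.1 hb with hb' | hb'
        · exact hscl (Finset.mem_coe.2 (Finset.mem_inter.1 ha').1)
            (Finset.mem_coe.2 (Finset.mem_inter.1 hb').1) hab
        · obtain ⟨S', hS'mem, haS'⟩ := Finset.mem_sup.1 (Finset.mem_inter.1 ha').2
          have hbS' : b ∈ S' := (Finset.inf'_le id hS'mem : I ⊆ S') (Finset.mem_sdiff.1 hb').1
          exact (hS' S' hS'mem).2.1 (Finset.mem_coe.2 haS') (Finset.mem_coe.2 hbS') hab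
      · rcases Finset.mem_union.1 hb with hb' | hb'
        · obtain ⟨S', hS'mem, hbS'⟩ := Finset.mem_sup.1 (Finset.mem_inter.1 hb').2
          have haS' : a ∈ S' := (Finset.inf'_le id hS'mem : I ⊆ S') (Finset.mem_sdiff.1 ha').1
          exact (hS' S' hS'mem).2.1 (Finset.mem_coe.2 haS') (Finset.mem_coe.2 hbS') hab
        · exact (hS' s₀ hs₀).2.1 (Finset.mem_coe.2 (hIs₀ (Finset.mem_sdiff.1 ha').1))
            (Finset.mem_coe.2 (hIs₀ (Finset.mem_sdiff.1 hb').1)) hab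
    have hmixdisj : Disjoint (s ∩ U) (I \ s) := by
      rw [Finset.disjoint_left]
      intro a ha hb
      exact (Finset.mem_sdiff.1 hb).2 (Finset.mem_inter.1 ha).1
    have hmix : (s ∩ U).card + (I \ s).card ≤ m := by
      have := hhost ((s ∩ U) ∪ (I \ s)) hmixP hmixcl
      rwa [Finset.card_union_of_disjoint hmixdisj] at this
    have h1 : (s ∪ U).card + (s ∩ U).card = s.card + U.card :=
      Finset.card_union_add_card_inter s U
    have h2 : (I ∩ s).card + (I \ s).card = I.card :=
      Finset.card_inter_add_card_sdiff I s
    have hsup : (Finset.cons s S hs).sup id = s ∪ U := by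
      rw [Finset.sup_cons]; rfl
    have hinf : (Finset.cons s S hs).inf' (Finset.cons_nonempty hs) id = s ∩ I := by
      rw [Finset.inf'_cons hne]; rfl
    rw [hsup, hinf]
    have h3 : (s ∩ I).card = (I ∩ s).card := by rw [Finset.inter_comm]
    omega

private lemma descent {k : ℕ} (hfree : G.CliqueFree (k+1)) (x : V)
    (T F : Finset V)
    (hTcl : G.IsClique (T : Set V))
    (hW : ∀ c, c ≠ x → ¬ G.Adj x c → ∀ t ∈ T, G.Adj t c)
    (hFno : ∀ f ∈ F, ∀ S : Finset V, (∀ a ∈ S, G.Adj x a) → G.IsClique (S : Set V) →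
        S.card = k - 1 → f ∉ S)
    (hsatc : ∀ u v : V, u ≠ v → ¬ G.Adj u v → ∃ C : Finset V, G.IsClique (C : Set V) ∧
        C.card = k - 1 ∧ u ∉ C ∧ v ∉ C ∧ ∀ a ∈ C, G.Adj u a ∧ G.Adj v a)
    (hk : 2 ≤ k) :
    ∀ n (T₀ F₀ : Finset V), T₀.card ≤ n → T₀ ⊆ T → F₀ ⊆ F →
      F₀.card + 1 ≤ T₀.card →
      (∀ t ∈ T₀, ∃ z, G.Adj x z ∧ ¬ G.Adj t z ∧ z ≠ t) →
      (∀ t ∈ T₀, ∀ z, G.Adj x z → ¬ G.Adj t z → z ≠ t → z ∈ F₀) → False := by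
  classical
  intro n
  induction n with
  | zero =>
    intro T₀ F₀ hc _ _ hcard _ _
    omega
  | succ n IH =>
    intro T₀ F₀ hc hT₀ hF₀ hcard hex hconf
    have hT₀ne : T₀.Nonempty := Finset.card_pos.1 (by omega)
    obtain ⟨t, ht⟩ := hT₀ne
    obtain ⟨f, hxf, htf, hft⟩ := hex t ht
    have hfF₀ : f ∈ F₀ := hconf t ht f hxf htf hft
    obtain ⟨C, hCcl, hCcard, htC, hfC, hCadj⟩ := hsatc t f (Ne.symm hft) htf
    -- x ∉ C
    have hxC : x ∉ C := by
      intro hxmem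
      refine hFno f (hF₀ hfF₀) (insert f (C.erase x)) ?_ ?_ ?_ (Finset.mem_insert_self f _)
      · intro a ha
        rcases Finset.mem_insert.1 ha with rfl | ha'
        · exact hxf
        · have h' := Finset.mem_erase.1 ha'
          exact hCcl (Finset.mem_coe.2 hxmem) (Finset.mem_coe.2 h'.2) (Ne.symm h'.1)
      · refine isClique_of _ ?_
        intro a ha b hb hab
        rcases Finset.mem_insert.1 ha with rfl | ha'
        · rcases Finset.mem_insert.1 hb with rfl | hb'
          · exact absurd rfl hab
          · exact (hCadj b (Finset.mem_of_mem_erase hb')).2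
        · rcases Finset.mem_insert.1 hb with rfl | hb'
          · exact ((hCadj a (Finset.mem_of_mem_erase ha')).2).symm
          · exact hCcl (Finset.mem_coe.2 (Finset.mem_of_mem_erase ha'))
              (Finset.mem_coe.2 (Finset.mem_of_mem_erase hb')) hab
      · rw [Finset.card_insert_of_notMem (fun h => hfC (Finset.mem_of_mem_erase h)),
          Finset.card_erase_of_mem hxmem, hCcard]
        omega
    set R₁ := (T₀.erase t).filter (fun r => r ∉ C) with hR₁def
    set T₁ := (T₀.erase t).filter (fun r => r ∈ C) with hT₁def
    set Cg := C.filter (fun c => ∀ r ∈ R₁, G.Adj r c) with hCgdef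
    set Φ := C.filter (fun c => ¬ ∀ r ∈ R₁, G.Adj r c) with hΦdef
    -- the swap clique K
    have hmemT : ∀ r ∈ R₁, r ∈ T := by
      intro r hr
      exact hT₀ (Finset.mem_of_mem_erase (Finset.mem_of_mem_filter r hr))
    have hKcl : G.IsClique ((insert t (Cg ∪ R₁) : Finset V) : Set V) := by
      refine isClique_of _ ?_
      intro a ha b hb hab
      rcases Finset.mem_insert.1 ha with rfl | ha'
      · rcases Finset.mem_insert.1 hb with rfl | hb'
        · exact absurd rfl hab
        · rcases Finset.mem_union.1 hb' with hbc | hbr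
          · exact (hCadj b (Finset.mem_of_mem_filter b hbc)).1
          · exact hTcl (Finset.mem_coe.2 (hT₀ ht)) (Finset.mem_coe.2 (hmemT b hbr)) hab
      · rcases Finset.mem_insert.1 hb with rfl | hb'
        · rcases Finset.mem_union.1 ha' with hac | har
          · exact ((hCadj a (Finset.mem_of_mem_filter a hac)).1).symm
          · exact hTcl (Finset.mem_coe.2 (hmemT a har)) (Finset.mem_coe.2 (hT₀ ht)) hab
        · rcases Finset.mem_union.1 ha' with hac | har
          · rcases Finset.mem_union.1 hb' with hbc | hbr
            · exact hCcl (Finset.mem_coe.2 (Finset.mem_of_mem_filter a hac))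
                (Finset.mem_coe.2 (Finset.mem_of_mem_filter b hbc)) hab
            · exact ((Finset.mem_filter.1 hac).2 b hbr).symm
          · rcases Finset.mem_union.1 hb' with hbc | hbr
            · exact (Finset.mem_filter.1 hbc).2 a har
            · exact hTcl (Finset.mem_coe.2 (hmemT a har)) (Finset.mem_coe.2 (hmemT b hbr)) hab
    have htnotin : t ∉ Cg ∪ R₁ := by
      intro h
      rcases Finset.mem_union.1 h with h' | h'
      · exact htC (Finset.mem_of_mem_filter t h')
      · exact (Finset.notMem_erase t T₀) (Finset.mem_of_mem_filter t h')
    have hdisj : Disjoint Cg R₁ := by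
      rw [Finset.disjoint_left]
      intro a ha hb
      exact (Finset.mem_filter.1 hb).2 (Finset.mem_of_mem_filter a ha)
    have hKcard : (insert t (Cg ∪ R₁)).card = 1 + Cg.card + R₁.card := by
      rw [Finset.card_insert_of_notMem htnotin, Finset.card_union_of_disjoint hdisj]
      ring
    have hKle : (insert t (Cg ∪ R₁)).card ≤ k := clique_card_le hfree hKcl
    have hCsplit : Cg.card + Φ.card = k - 1 := by
      rw [hCgdef, hΦdef, ← hCcard]
      exact Finset.card_filter_add_card_filter_not _
    have hR₁Φ : R₁.card ≤ Φ.card := by omega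
    -- Φ ⊆ F₀
    have hΦF₀ : Φ ⊆ F₀ := by
      intro φ hφ
      obtain ⟨hφC, hφP⟩ := Finset.mem_filter.1 hφ
      push_neg at hφP
      obtain ⟨r, hr, hradj⟩ := hφP
      have hrT₀ : r ∈ T₀ := Finset.mem_of_mem_erase (Finset.mem_of_mem_filter r hr)
      have hrφ : φ ≠ r := by
        intro h
        exact (Finset.mem_filter.1 hr).2 (h ▸ hφC)
      by_cases hφx : G.Adj x φ
      · exact hconf r hrT₀ φ hφx hradj hrφ
      · have hφnex : φ ≠ x := fun h => hxC (h ▸ hφC)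
        exact absurd (hW φ hφnex hφx r (hmemT r hr)) hradj
    set F₁ := (F₀.erase f) \ Φ with hF₁def
    have hΦsub : Φ ⊆ F₀.erase f := by
      intro φ hφ
      refine Finset.mem_erase.2 ⟨?_, hΦF₀ hφ⟩
      intro h
      exact hfC (h ▸ (Finset.mem_filter.1 hφ).1)
    have hF₁card : F₁.card = F₀.card - 1 - Φ.card := by
      rw [hF₁def, Finset.card_sdiff_of_subset hΦsub, Finset.card_erase_of_mem hfF₀]
    have hfcard : 1 ≤ F₀.card := Finset.card_pos.2 ⟨f, hfF₀⟩
    have hΦle : Φ.card ≤ F₀.card - 1 := by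
      have h' := Finset.card_le_card hΦsub
      rwa [Finset.card_erase_of_mem hfF₀] at h'
    have hTsplit : T₁.card + R₁.card = T₀.card - 1 := by
      rw [← Finset.card_erase_of_mem ht, hT₁def, hR₁def]
      exact Finset.card_filter_add_card_filter_not _
    refine IH T₁ F₁ ?_ ?_ ?_ ?_ ?_ ?_
    · have h1 := Finset.card_le_card (Finset.filter_subset (fun r => r ∈ C) (T₀.erase t))
      rw [Finset.card_erase_of_mem ht] at h1
      rw [hT₁def]
      omega
    · exact (Finset.filter_subset _ _).trans ((Finset.erase_subset _ _).trans hT₀)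
    · exact Finset.sdiff_subset.trans ((Finset.erase_subset _ _).trans hF₀)
    · omega
    · intro t₁ ht₁
      exact hex t₁ (Finset.mem_of_mem_erase (Finset.mem_of_mem_filter t₁ ht₁))
    · intro t₁ ht₁ z hxz hnadj hz
      have ht₁T₀ : t₁ ∈ T₀ := Finset.mem_of_mem_erase (Finset.mem_of_mem_filter t₁ ht₁)
      have ht₁C : t₁ ∈ C := (Finset.mem_filter.1 ht₁).2
      have hzF₀ : z ∈ F₀ := hconf t₁ ht₁T₀ z hxz hnadj hz
      refine Finset.mem_sdiff.2 ⟨Finset.mem_erase.2 ⟨?_, hzF₀⟩, ?_⟩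
      · rintro rfl
        exact hnadj ((hCadj t₁ ht₁C).2).symm
      · intro hzΦ
        have hzC : z ∈ Φ := hzΦ
        exact hnadj (hCcl (Finset.mem_coe.2 ht₁C)
          (Finset.mem_coe.2 (Finset.mem_of_mem_filter z hzC)) (Ne.symm hz))

end Hajnal

theorem stmt_6 (k : ℕ) {V : Type*} [Fintype V] (G : SimpleGraph V) [DecidableRel G.Adj]
    (hfree : G.CliqueFree (k + 1))
    (hsat : ∀ u v : V, u ≠ v → ¬ G.Adj u v → ¬ (G ⊔ SimpleGraph.edge u v).CliqueFree (k + 1)) :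
    (∃ v : V, ∀ w : V, w ≠ v → G.Adj v w) ∨ (∀ v : V, 2 * (k - 1) ≤ G.degree v) := by
  classical
  by_cases hU : ∃ v : V, ∀ w : V, w ≠ v → G.Adj v w
  · exact Or.inl hU
  · right
    intro x
    by_contra hdeg
    push_neg at hdeg
    have hk : 2 ≤ k := by omega
    push_neg at hU
    set A := G.neighborFinset x with hAdef
    have hAcard : A.card ≤ 2 * k - 3 := by
      rw [hAdef, SimpleGraph.card_neighborFinset_eq_degree]
      omega
    have hmemA : ∀ a, a ∈ A ↔ G.Adj x a := fun a => SimpleGraph.mem_neighborFinset G x a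
    have hhost : ∀ K : Finset V, (∀ a ∈ K, G.Adj x a) → G.IsClique (K : Set V) →
        K.card ≤ k - 1 := by
      intro K hKA hKcl
      by_contra h
      push_neg at h
      have hxK : x ∉ K := fun hx => G.irrefl (hKA x hx)
      have hcl : G.IsClique ((insert x K : Finset V) : Set V) := by
        refine isClique_of _ ?_
        intro a ha b hb hab
        rcases Finset.mem_insert.1 ha with rfl | ha'
        · rcases Finset.mem_insert.1 hb with rfl | hb'
          · exact absurd rfl hab
          · exact hKA b hb'
        · rcases Finset.mem_insert.1 hb with rfl | hb'
          · exact (hKA a ha').symm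
          · exact hKcl (Finset.mem_coe.2 ha') (Finset.mem_coe.2 hb') hab
      have hle := clique_card_le hfree hcl
      rw [Finset.card_insert_of_notMem hxK] at hle
      omega
    set 𝒮 := A.powerset.filter (fun (S : Finset V) => G.IsClique (S : Set V) ∧ S.card = k - 1) with h𝒮def
    have h𝒮mem : ∀ S : Finset V, S ∈ 𝒮 ↔
        (S ⊆ A ∧ G.IsClique (S : Set V) ∧ S.card = k - 1) := by
      intro S
      rw [h𝒮def, Finset.mem_filter, Finset.mem_powerset]
    obtain ⟨y, hyx, hxy⟩ := hU x
    have h𝒮ne : 𝒮.Nonempty := by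
      obtain ⟨C, hCcl, hCcard, _, _, hCadj⟩ := sat_clique hfree hsat (Ne.symm hyx) hxy
      exact ⟨C, (h𝒮mem C).2 ⟨fun a ha => (hmemA a).2 (hCadj a ha).1, hCcl, hCcard⟩⟩
    have hhel := helly (k-1) (fun a => G.Adj x a) (fun K h1 h2 => hhost K h1 h2) 𝒮 h𝒮ne (by
      intro S hS
      obtain ⟨hSA, hScl, hScard⟩ := (h𝒮mem S).1 hS
      exact ⟨fun a ha => (hmemA a).1 (hSA ha), hScl, hScard⟩)
    set U := 𝒮.sup id with hUdef
    set T := 𝒮.inf' h𝒮ne id with hTdef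
    have hUA : U ⊆ A := by
      intro a ha
      obtain ⟨S, hS, haS⟩ := Finset.mem_sup.1 ha
      exact ((h𝒮mem S).1 hS).1 haS
    obtain ⟨S₀, hS₀⟩ := h𝒮ne
    have hTS : ∀ S ∈ 𝒮, T ⊆ S := fun S hS => Finset.inf'_le id hS
    have hTA : T ⊆ A := (hTS S₀ hS₀).trans (((h𝒮mem S₀).1 hS₀).1)
    have hTcl : G.IsClique (T : Set V) :=
      (((h𝒮mem S₀).1 hS₀).2.1).subset (Finset.coe_subset.2 (hTS S₀ hS₀))
    set F := A.filter (fun a => ∀ S ∈ 𝒮, a ∉ S) with hFdef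
    have hUF : Disjoint U F := by
      rw [Finset.disjoint_left]
      intro a haU haF
      obtain ⟨S, hS, haS⟩ := Finset.mem_sup.1 haU
      exact (Finset.mem_filter.1 haF).2 S hS haS
    have hUFcard : U.card + F.card ≤ A.card := by
      rw [← Finset.card_union_of_disjoint hUF]
      exact Finset.card_le_card (Finset.union_subset hUA (Finset.filter_subset _ _))
    have hTcard : F.card + 1 ≤ T.card := by omega
    have hW : ∀ c, c ≠ x → ¬ G.Adj x c → ∀ t ∈ T, G.Adj t c := by
      intro c hcx hxc t htT
      obtain ⟨Sc, hSccl, hSccard, _, _, hScadj⟩ := sat_clique hfree hsat (Ne.symm hcx) hxc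
      have hScS : Sc ∈ 𝒮 := (h𝒮mem Sc).2
        ⟨fun a ha => (hmemA a).2 (hScadj a ha).1, hSccl, hSccard⟩
      exact ((hScadj t (hTS Sc hScS htT)).2).symm
    have hFno : ∀ f ∈ F, ∀ S : Finset V, (∀ a ∈ S, G.Adj x a) → G.IsClique (S : Set V) →
        S.card = k - 1 → f ∉ S := by
      intro f hf S hSA hScl hScard hfS
      have hSS : S ∈ 𝒮 := (h𝒮mem S).2 ⟨fun a ha => (hmemA a).2 (hSA a ha), hScl, hScard⟩
      exact (Finset.mem_filter.1 hf).2 S hSS hfS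
    have hexseed : ∀ t ∈ T, ∃ z, G.Adj x z ∧ ¬ G.Adj t z ∧ z ≠ t := by
      intro t htT
      obtain ⟨w, hwt, htw⟩ := hU t
      have hwx : w ≠ x := by
        rintro rfl
        exact htw ((hmemA t).1 (hTA htT)).symm
      by_cases hxw : G.Adj x w
      · exact ⟨w, hxw, htw, hwt⟩
      · exact absurd (hW w hwx hxw t htT) htw
    have hconfseed : ∀ t ∈ T, ∀ z, G.Adj x z → ¬ G.Adj t z → z ≠ t → z ∈ F := by
      intro t htT z hxz hnadj hzt
      rw [hFdef, Finset.mem_filter]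
      refine ⟨(hmemA z).2 hxz, ?_⟩
      intro S hS hzS
      exact hnadj (((h𝒮mem S).1 hS).2.1 (Finset.mem_coe.2 (hTS S hS htT))
        (Finset.mem_coe.2 hzS) (Ne.symm hzt))
    exact descent hfree x T F hTcl hW hFno
      (fun u v h1 h2 => sat_clique hfree hsat h1 h2) hk
      T.card T F le_rfl Finset.Subset.rfl Finset.Subset.rfl hTcard hexseed hconfseed
end

section
/- If G is a doubly saturated R(s,t)-good graph with t ≥ 3, then G has no vertex adjacent to all other vertices. -/
theorem stmt_7 (s t : ℕ) (ht : 3 ≤ t) {V : Type*} (G : SimpleGraph V)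
    (hG : DoublySaturated s t G) :
    ¬ ∃ v : V, ∀ w : V, w ≠ v → G.Adj v w := by
  classical
  rintro ⟨v, hv⟩
  obtain ⟨⟨hcf, hicf⟩, hadd, hdel, hne, hcne⟩ := hG
  have hex : ∃ a b, a ≠ b ∧ ¬ G.Adj a b := by
    by_contra h
    push_neg at h
    apply hne
    ext x y
    simp only [SimpleGraph.top_adj]
    exact ⟨G.ne_of_adj, fun hxy => h x y hxy⟩
  obtain ⟨a, b, hab, hnadj⟩ := hex
  have hav : a ≠ v := by
    rintro rfl
    exact hnadj (hv b (fun hb => hab hb.symm))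
  have hva : G.Adj v a := hv a hav
  have h1 := hdel v a hva
  rw [SimpleGraph.CliqueFree] at h1
  push_neg at h1
  obtain ⟨S, hS⟩ := h1
  have hvaS : v ∈ S ∧ a ∈ S := by
    by_contra h
    apply hicf S
    refine ⟨?_, hS.2⟩
    intro x hx y hy hxy
    have hadj := hS.1 hx hy hxy
    rw [SimpleGraph.compl_adj] at hadj ⊢
    refine ⟨hxy, fun hGxy => hadj.2 ?_⟩
    rw [SimpleGraph.deleteEdges_adj]
    refine ⟨hGxy, ?_⟩
    intro hmem
    simp only [Set.mem_singleton_iff, Sym2.eq, Sym2.rel_iff', Prod.mk.injEq,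
      Prod.swap_prod_mk] at hmem
    rcases hmem with ⟨rfl, rfl⟩ | ⟨rfl, rfl⟩
    · exact h ⟨hx, hy⟩
    · exact h ⟨hy, hx⟩
  obtain ⟨hvS, haS⟩ := hvaS
  have hsub : ¬ S ⊆ {v, a} := by
    intro hsub
    have := Finset.card_le_card hsub
    rw [hS.2] at this
    have h2 : ({v, a} : Finset V).card ≤ 2 := Finset.card_insert_le _ _ |>.trans (by simp)
    omega
  obtain ⟨w, hwS, hw⟩ := Finset.not_subset.mp hsub
  simp only [Finset.mem_insert, Finset.mem_singleton, not_or] at hw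
  obtain ⟨hwv, hwa⟩ := hw
  have hadj := hS.1 hvS hwS (Ne.symm hwv)
  rw [SimpleGraph.compl_adj] at hadj
  apply hadj.2
  rw [SimpleGraph.deleteEdges_adj]
  refine ⟨hv w hwv, ?_⟩
  simp only [Set.mem_singleton_iff, Sym2.eq, Sym2.rel_iff', Prod.mk.injEq,
    Prod.swap_prod_mk, not_or]
  constructor
  · rintro ⟨-, rfl⟩; exact hwa rfl
  · rintro ⟨h1, -⟩; exact hav h1.symm
end

section
/- There is no doubly saturated R(3,4)-good graph. -/
section Aux
open SimpleGraph
variable {V : Type} {G : SimpleGraph V}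

lemma tri' (h : G.CliqueFree 3) {x y z : V}
    (h1 : G.Adj x y) (h2 : G.Adj x z) (h3 : G.Adj y z) : False := by
  classical
  exact h {x,y,z} (SimpleGraph.is3Clique_triple_iff.2 ⟨h1, h2, h3⟩)

lemma ind4' (h : Gᶜ.CliqueFree 4) {w1 w2 w3 w4 : V}
    (e12 : w1 ≠ w2) (e13 : w1 ≠ w3) (e14 : w1 ≠ w4) (e23 : w2 ≠ w3) (e24 : w2 ≠ w4)
    (e34 : w3 ≠ w4)
    (a12 : ¬G.Adj w1 w2) (a13 : ¬G.Adj w1 w3) (a14 : ¬G.Adj w1 w4)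
    (a23 : ¬G.Adj w2 w3) (a24 : ¬G.Adj w2 w4) (a34 : ¬G.Adj w3 w4) : False := by
  classical
  have a21 : ¬G.Adj w2 w1 := fun h' => a12 h'.symm
  have a31 : ¬G.Adj w3 w1 := fun h' => a13 h'.symm
  have a41 : ¬G.Adj w4 w1 := fun h' => a14 h'.symm
  have a32 : ¬G.Adj w3 w2 := fun h' => a23 h'.symm
  have a42 : ¬G.Adj w4 w2 := fun h' => a24 h'.symm
  have a43 : ¬G.Adj w4 w3 := fun h' => a34 h'.symm
  refine h {w1, w2, w3, w4} ⟨?_, ?_⟩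
  · intro p hp q hq hpq
    simp only [Finset.coe_insert, Set.mem_insert_iff, Finset.coe_singleton,
      Set.mem_singleton_iff] at hp hq
    rw [SimpleGraph.compl_adj]
    rcases hp with rfl | rfl | rfl | rfl <;> rcases hq with rfl | rfl | rfl | rfl <;>
      first
        | exact absurd rfl hpq
        | exact ⟨hpq, by assumption⟩
  · rw [Finset.card_insert_of_notMem (by simp [e12, e13, e14]),
      Finset.card_insert_of_notMem (by simp [e23, e24]),
      Finset.card_insert_of_notMem (by simp [e34]), Finset.card_singleton]

/-- the key "M" lemma: for an edge (w,z) with deletion pair (α,β), any vertex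
nonadjacent to both α and β is among {w,z,α,β}. -/
lemma Mlem' (h3 : G.CliqueFree 3) (h4 : Gᶜ.CliqueFree 4) {w z α β : V}
    (hwz : G.Adj w z) (nαw : ¬G.Adj α w) (nαz : ¬G.Adj α z)
    (nβw : ¬G.Adj β w) (nβz : ¬G.Adj β z) (nαβ : ¬G.Adj α β) (hαβ : α ≠ β) :
    ∀ δ, ¬G.Adj δ α → ¬G.Adj δ β → δ = w ∨ δ = z ∨ δ = α ∨ δ = β := by
  intro δ h1 h2
  by_contra hcon
  push_neg at hcon
  obtain ⟨d1, d2, d3, d4⟩ := hcon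
  have hαw : α ≠ w := fun h => nαz (by rw [h]; exact hwz)
  have hαz : α ≠ z := fun h => nαw (by rw [h]; exact hwz.symm)
  have hβw : β ≠ w := fun h => nβz (by rw [h]; exact hwz)
  have hβz : β ≠ z := fun h => nβw (by rw [h]; exact hwz.symm)
  have hδw : G.Adj δ w := by
    by_contra hδw
    exact ind4' h4 hαw.symm hβw.symm d1.symm hαβ d3.symm d4.symm
      (fun h' => nαw h'.symm) (fun h' => nβw h'.symm) (fun h' => hδw h'.symm)
      nαβ (fun h' => h1 h'.symm) (fun h' => h2 h'.symm)
  have hδz : G.Adj δ z := by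
    by_contra hδz
    exact ind4' h4 hαz.symm hβz.symm d2.symm hαβ d3.symm d4.symm
      (fun h' => nαz h'.symm) (fun h' => nβz h'.symm) (fun h' => hδz h'.symm)
      nαβ (fun h' => h1 h'.symm) (fun h' => h2 h'.symm)
  exact tri' h3 hδw hδz hwz

/-- max degree three: if c has three distinct neighbors, any neighbor is one of them. -/
lemma deg3' (h3 : G.CliqueFree 3) (h4 : Gᶜ.CliqueFree 4) {c w1 w2 w3 : V}
    (h1 : G.Adj c w1) (h2 : G.Adj c w2) (h3' : G.Adj c w3)
    (n12 : w1 ≠ w2) (n13 : w1 ≠ w3) (n23 : w2 ≠ w3) :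
    ∀ w, G.Adj c w → w = w1 ∨ w = w2 ∨ w = w3 := by
  intro w hw
  by_contra hcon
  push_neg at hcon
  obtain ⟨m1, m2, m3⟩ := hcon
  exact ind4' h4 n12 n13 m1.symm n23 m2.symm m3.symm
    (fun h' => tri' h3 h1 h2 h') (fun h' => tri' h3 h1 h3' h')
    (fun h' => tri' h3 h1 hw h') (fun h' => tri' h3 h2 h3' h')
    (fun h' => tri' h3 h2 hw h') (fun h' => tri' h3 h3' hw h')


/-- common neighbor extraction from addition-saturation -/
lemma cn' (h3 : G.CliqueFree 3)
    (hadd : ∀ u v : V, u ≠ v → ¬ G.Adj u v → ¬ (G ⊔ SimpleGraph.edge u v).CliqueFree 3)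
    {u v : V} (hne : u ≠ v) (hn : ¬G.Adj u v) : ∃ w, G.Adj u w ∧ G.Adj v w := by
  classical
  have h := hadd u v hne hn
  rw [SimpleGraph.CliqueFree] at h
  push_neg at h
  obtain ⟨t, ht⟩ := h
  obtain ⟨x, y, z, hxy, hxz, hyz, rfl⟩ := Finset.card_eq_three.1 ht.card_eq
  have hcl := ht.isClique
  have axy : (G ⊔ SimpleGraph.edge u v).Adj x y := hcl (by simp) (by simp) hxy
  have axz : (G ⊔ SimpleGraph.edge u v).Adj x z := hcl (by simp) (by simp) hxz
  have ayz : (G ⊔ SimpleGraph.edge u v).Adj y z := hcl (by simp) (by simp) hyz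
  have dec : ∀ p q : V, (G ⊔ SimpleGraph.edge u v).Adj p q →
      G.Adj p q ∨ (p = u ∧ q = v) ∨ (p = v ∧ q = u) := by
    intro p q h'
    rcases h' with h' | h'
    · exact Or.inl h'
    · rw [SimpleGraph.edge_adj] at h'
      tauto
  have fin : ∀ r : V, (G ⊔ SimpleGraph.edge u v).Adj u r →
      (G ⊔ SimpleGraph.edge u v).Adj v r → ∃ w, G.Adj u w ∧ G.Adj v w := by
    intro r h1 h2
    refine ⟨r, ?_, ?_⟩
    · rcases dec _ _ h1 with h' | h' | h'
      · exact h'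
      · exact ((h'.2 ▸ h2).ne rfl).elim
      · exact absurd h'.1 hne
    · rcases dec _ _ h2 with h' | h' | h'
      · exact h'
      · exact absurd h'.1 hne.symm
      · exact ((h'.2 ▸ h1).ne rfl).elim
  rcases dec _ _ axy with hxy' | ⟨hxu, hyv⟩ | ⟨hxv, hyu⟩
  · rcases dec _ _ axz with hxz' | ⟨hxu, hzv⟩ | ⟨hxv, hzu⟩
    · rcases dec _ _ ayz with hyz' | ⟨hyu, hzv⟩ | ⟨hyv, hzu⟩
      · exact absurd hyz' (fun h' => tri' h3 hxy' hxz' h')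
      · exact fin x (hyu ▸ axy.symm) (hzv ▸ axz.symm)
      · exact fin x (hzu ▸ axz.symm) (hyv ▸ axy.symm)
    · exact fin y (hxu ▸ axy) (hzv ▸ ayz.symm)
    · exact fin y (hzu ▸ ayz.symm) (hxv ▸ axy)
  · exact fin z (hxu ▸ axz) (hyv ▸ ayz)
  · exact fin z (hyu ▸ ayz) (hxv ▸ axz)


/-- deletion pair extraction from deletion-saturation -/
lemma delp' (h4 : Gᶜ.CliqueFree 4)
    (hdel : ∀ u v : V, G.Adj u v → ¬ ((G.deleteEdges {s(u, v)})ᶜ.CliqueFree 4))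
    {u v : V} (huv : G.Adj u v) :
    ∃ a b : V, a ≠ b ∧ a ≠ u ∧ a ≠ v ∧ b ≠ u ∧ b ≠ v ∧
      ¬G.Adj a u ∧ ¬G.Adj a v ∧ ¬G.Adj b u ∧ ¬G.Adj b v ∧ ¬G.Adj a b := by
  classical
  have h := hdel u v huv
  rw [SimpleGraph.CliqueFree] at h
  push_neg at h
  obtain ⟨t, ht⟩ := h
  have hcl := ht.isClique
  have hcard := ht.card_eq
  have Hadj : ∀ p q : V, (G.deleteEdges {s(u, v)})ᶜ.Adj p q →
      p ≠ q ∧ (¬G.Adj p q ∨ ((p = u ∧ q = v) ∨ (p = v ∧ q = u))) := by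
    intro p q h'
    rw [SimpleGraph.compl_adj, SimpleGraph.deleteEdges_adj] at h'
    refine ⟨h'.1, ?_⟩
    by_cases hg : G.Adj p q
    · refine Or.inr ?_
      have := h'.2
      rw [← Sym2.eq_iff]
      by_contra hx
      exact this ⟨hg, by simpa using hx⟩
    · exact Or.inl hg
  have hu : u ∈ t := by
    by_contra hu
    refine h4 t ⟨?_, hcard⟩
    intro p hp q hq hpq
    obtain ⟨hne, hor⟩ := Hadj _ _ (hcl hp hq hpq)
    rw [SimpleGraph.compl_adj]
    refine ⟨hpq, ?_⟩
    rcases hor with h' | ⟨h1, _⟩ | ⟨_, h2⟩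
    · exact h'
    · exact absurd (h1 ▸ hp) hu
    · exact absurd (h2 ▸ hq) hu
  have hv : v ∈ t := by
    by_contra hv
    refine h4 t ⟨?_, hcard⟩
    intro p hp q hq hpq
    obtain ⟨hne, hor⟩ := Hadj _ _ (hcl hp hq hpq)
    rw [SimpleGraph.compl_adj]
    refine ⟨hpq, ?_⟩
    rcases hor with h' | ⟨_, h2⟩ | ⟨h1, _⟩
    · exact h'
    · exact absurd (h2 ▸ hq) hv
    · exact absurd (h1 ▸ hp) hv
  have hvt' : v ∈ t.erase u := Finset.mem_erase.2 ⟨huv.ne', hv⟩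
  have hcard2 : ((t.erase u).erase v).card = 2 := by
    rw [Finset.card_erase_of_mem hvt', Finset.card_erase_of_mem hu, hcard]
  obtain ⟨a, b, hab, habs⟩ := Finset.card_eq_two.1 hcard2
  have ha : a ∈ (t.erase u).erase v := by rw [habs]; simp
  have hb : b ∈ (t.erase u).erase v := by rw [habs]; simp
  have hav : a ≠ v := (Finset.mem_erase.1 ha).1
  have hau : a ≠ u := (Finset.mem_erase.1 (Finset.mem_erase.1 ha).2).1
  have hat : a ∈ t := (Finset.mem_erase.1 (Finset.mem_erase.1 ha).2).2
  have hbv : b ≠ v := (Finset.mem_erase.1 hb).1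
  have hbu : b ≠ u := (Finset.mem_erase.1 (Finset.mem_erase.1 hb).2).1
  have hbt : b ∈ t := (Finset.mem_erase.1 (Finset.mem_erase.1 hb).2).2
  have key : ∀ p q : V, p ∈ t → q ∈ t → p ≠ q → p ≠ u → p ≠ v → ¬G.Adj p q := by
    intro p q hp hq hpq hpu hpv
    obtain ⟨_, hor⟩ := Hadj _ _ (hcl hp hq hpq)
    rcases hor with h' | ⟨h1, _⟩ | ⟨h1, _⟩
    · exact h'
    · exact absurd h1 hpu
    · exact absurd h1 hpv
  exact ⟨a, b, hab, hau, hav, hbu, hbv,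
    key a u hat hu hau hau hav, key a v hat hv hav hau hav,
    key b u hbt hu hbu hbu hbv, key b v hbt hv hbv hbu hbv,
    key a b hat hbt hab hau hav⟩


/-- the "Z" configuration is contradictory -/
lemma zlem (h3 : G.CliqueFree 3) (h4 : Gᶜ.CliqueFree 4)
    (hadd : ∀ u v : V, u ≠ v → ¬ G.Adj u v → ¬ (G ⊔ SimpleGraph.edge u v).CliqueFree 3)
    {u v a b g x y : V}
    (huv : G.Adj u v)
    (nau : ¬G.Adj a u) (nav : ¬G.Adj a v) (nbu : ¬G.Adj b u) (nbv : ¬G.Adj b v)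
    (nab : ¬G.Adj a b)
    (hag : G.Adj a g) (hbg : G.Adj b g) (hug : ¬G.Adj u g) (hvg : G.Adj v g)
    (Ng : ∀ w, G.Adj g w → w = a ∨ w = b ∨ w = v)
    (nxv : ¬G.Adj x v) (nxg : ¬G.Adj x g) (nyv : ¬G.Adj y v) (nyg : ¬G.Adj y g)
    (nxy : ¬G.Adj x y)
    (Nu : ∀ w, G.Adj u w → w = x ∨ w = y ∨ w = v)
    (hux : G.Adj u x) (huy : G.Adj u y)
    (hay : G.Adj a y) (hbx : G.Adj b x) (nax : ¬G.Adj a x) (nby : ¬G.Adj b y) :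
    False := by
  have hax' : a ≠ x := fun h => nab (by rw [h]; exact hbx.symm)
  have hby' : b ≠ y := fun h => nab (by subst h; exact hay)
  obtain ⟨ε, haε, hxε⟩ := cn' h3 hadd hax' nax
  obtain ⟨φ, hbφ, hyφ⟩ := cn' h3 hadd hby' nby
  have nεb : ¬G.Adj ε b := fun h => tri' h3 hbx.symm hxε h.symm
  have nεy : ¬G.Adj ε y := fun h => tri' h3 hay haε h.symm
  have nεu : ¬G.Adj ε u := by
    intro h
    rcases Nu ε h.symm with rfl | rfl | rfl
    · exact G.irrefl hxε
    · exact nxy hxε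
    · exact nav haε
  have nεg : ¬G.Adj ε g := by
    intro h
    rcases Ng ε h.symm with rfl | rfl | rfl
    · exact G.irrefl haε
    · exact nab haε
    · exact nav haε
  have nφa : ¬G.Adj φ a := fun h => tri' h3 hay h.symm hyφ
  have nφx : ¬G.Adj φ x := fun h => tri' h3 hbx hbφ h.symm
  have nφu : ¬G.Adj φ u := by
    intro h
    rcases Nu φ h.symm with rfl | rfl | rfl
    · exact nxy hyφ.symm
    · exact G.irrefl hyφ
    · exact nbv hbφ
  have nφg : ¬G.Adj φ g := by
    intro h
    rcases Ng φ h.symm with rfl | rfl | rfl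
    · exact nab hbφ.symm
    · exact G.irrefl hbφ
    · exact nbv hbφ
  have hug' : u ≠ g := fun h => nau (by rw [h]; exact hag)
  have huε : u ≠ ε := fun h => nau (by subst h; exact haε)
  have huφ : u ≠ φ := fun h => nbu (by subst h; exact hbφ)
  have hgε : g ≠ ε := fun h => nxg (by rw [h]; exact hxε)
  have hgφ : g ≠ φ := fun h => nyg (by rw [h]; exact hyφ)
  have hεφ' : ε ≠ φ := fun h => nφa (by subst h; exact haε.symm)
  have hεφ : G.Adj ε φ := by
    by_contra h
    exact ind4' h4 hug' huε huφ hgε hgφ hεφ' hug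
      (fun h' => nεu h'.symm) (fun h' => nφu h'.symm)
      (fun h' => nεg h'.symm) (fun h' => nφg h'.symm) h
  by_cases hvε : G.Adj v ε
  · have nvφ : ¬G.Adj v φ := fun h => tri' h3 hvε h hεφ
    have hax2 : a ≠ φ := fun h => nab (by subst h; exact hbφ.symm)
    have hav' : a ≠ v := fun h => nau (by rw [h]; exact huv.symm)
    have hxφ : x ≠ φ := fun h => nxy (by subst h; exact hyφ.symm)
    have hxv' : x ≠ v := fun h => nxg (by rw [h]; exact hvg)
    have hφv : φ ≠ v := fun h => nbv (by subst h; exact hbφ)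
    exact ind4' h4 hax' hax2 hav' hxφ hxv' hφv
      nax (fun h' => nφa h'.symm) nav (fun h' => nφx h'.symm) nxv
      (fun h' => nvφ h'.symm)
  · have hbε : b ≠ ε := fun h => nab (by subst h; exact haε)
    have hbv' : b ≠ v := fun h => nbu (by rw [h]; exact huv.symm)
    have hyε : y ≠ ε := fun h => nxy (by subst h; exact hxε)
    have hyv' : y ≠ v := fun h => nyg (by rw [h]; exact hvg)
    have hεv : ε ≠ v := fun h => nav (by subst h; exact haε)
    exact ind4' h4 hby' hbε hbv' hyε hyv' hεv
      nby (fun h' => nεb h'.symm) nbv (fun h' => nεy h'.symm) nyv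
      (fun h' => hvε h'.symm)


/-- subcase of γ = a with `b ~ x` and `¬ b ~ y` -/
lemma s15x (h3 : G.CliqueFree 3) (h4 : Gᶜ.CliqueFree 4)
    (hadd : ∀ u v : V, u ≠ v → ¬ G.Adj u v → ¬ (G ⊔ SimpleGraph.edge u v).CliqueFree 3)
    (hdel : ∀ u v : V, G.Adj u v → ¬ ((G.deleteEdges {s(u, v)})ᶜ.CliqueFree 4))
    {u v a b g x y : V}
    (huv : G.Adj u v)
    (nau : ¬G.Adj a u) (nav : ¬G.Adj a v) (nbu : ¬G.Adj b u) (nbv : ¬G.Adj b v)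
    (nab : ¬G.Adj a b) (hab : a ≠ b)
    (hag : G.Adj a g) (hbg : G.Adj b g) (hug : ¬G.Adj u g) (hvg : G.Adj v g)
    (Ng : ∀ w, G.Adj g w → w = a ∨ w = b ∨ w = v)
    (nxv : ¬G.Adj x v) (nxg : ¬G.Adj x g) (nyv : ¬G.Adj y v) (nyg : ¬G.Adj y g)
    (nxy : ¬G.Adj x y)
    (hax : G.Adj a x) (hay : G.Adj a y)
    (Na : ∀ w, G.Adj a w → w = x ∨ w = y ∨ w = g)
    (hbx : G.Adj b x) (nby : ¬G.Adj b y) : False := by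
  have M := Mlem' h3 h4 huv nau nav nbu nbv nab hab
  have final : ¬G.Adj u y → False := by
    intro nuy
    have hyu' : u ≠ y := fun h => by subst h; exact nyv huv
    obtain ⟨ζ, huζ, hyζ⟩ := cn' h3 hadd hyu' nuy
    have nζa : ¬G.Adj ζ a := by
      intro h
      rcases Na ζ h.symm with rfl | rfl | rfl
      · exact nxy hyζ.symm
      · exact G.irrefl hyζ
      · exact hug huζ
    have hζb : G.Adj ζ b := by
      by_contra hζb
      rcases M ζ nζa hζb with rfl | rfl | rfl | rfl
      · exact G.irrefl huζ
      · exact nyv hyζ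
      · exact nau huζ.symm
      · exact nbu huζ.symm
    have hgx' : g ≠ x := fun h => by subst h; exact nxv hvg.symm
    have hgζ : g ≠ ζ := fun h => by subst h; exact hug huζ
    have hxζ : x ≠ ζ := fun h => by subst h; exact nxy hyζ.symm
    have Nb := deg3' h3 h4 hbg hbx hζb.symm hgx' hgζ hxζ
    have hyv' : y ≠ v := fun h => by subst h; exact nyg hvg
    obtain ⟨θ, hyθ, hvθ⟩ := cn' h3 hadd hyv' nyv
    have nθa : ¬G.Adj θ a := by
      intro h
      rcases Na θ h.symm with rfl | rfl | rfl
      · exact nxv hvθ.symm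
      · exact G.irrefl hyθ
      · exact nyg hyθ
    have nθb : ¬G.Adj θ b := by
      intro h
      rcases Nb θ h.symm with rfl | rfl | rfl
      · exact nyg hyθ
      · exact nxv hvθ.symm
      · exact tri' h3 huv huζ hvθ
    rcases M θ nθa nθb with rfl | rfl | rfl | rfl
    · exact nuy hyθ.symm
    · exact G.irrefl hvθ
    · exact nav hvθ.symm
    · exact nbv hvθ.symm
  obtain ⟨p, q, hpq, hpb, hpg, hqb, hqg, npb, npg, nqb, nqg, npq⟩ := delp' h4 hdel hbg
  have classify : ∀ r, r ≠ g → ¬G.Adj r b → ¬G.Adj r g → r = u ∨ r = y := by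
    intro r hrg nrb nrg
    by_cases hra : G.Adj r a
    · rcases Na r hra.symm with rfl | rfl | rfl
      · exact absurd hbx.symm nrb
      · exact Or.inr rfl
      · exact absurd rfl hrg
    · rcases M r hra nrb with rfl | rfl | rfl | rfl
      · exact Or.inl rfl
      · exact absurd hvg nrg
      · exact absurd hag nrg
      · exact absurd hbg nrg
  rcases classify p hpg npb npg with rfl | rfl <;> rcases classify q hqg nqb nqg with rfl | rfl
  · exact absurd rfl hpq
  · exact final npq
  · exact final fun h => npq h.symm
  · exact absurd rfl hpq

/-- the subcase where the common neighbour γ of x,y is a -/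
lemma sub15 (h3 : G.CliqueFree 3) (h4 : Gᶜ.CliqueFree 4)
    (hadd : ∀ u v : V, u ≠ v → ¬ G.Adj u v → ¬ (G ⊔ SimpleGraph.edge u v).CliqueFree 3)
    (hdel : ∀ u v : V, G.Adj u v → ¬ ((G.deleteEdges {s(u, v)})ᶜ.CliqueFree 4))
    {u v a b g x y : V}
    (huv : G.Adj u v)
    (nau : ¬G.Adj a u) (nav : ¬G.Adj a v) (nbu : ¬G.Adj b u) (nbv : ¬G.Adj b v)
    (nab : ¬G.Adj a b) (hab : a ≠ b)
    (hag : G.Adj a g) (hbg : G.Adj b g) (hug : ¬G.Adj u g) (hvg : G.Adj v g)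
    (Ng : ∀ w, G.Adj g w → w = a ∨ w = b ∨ w = v)
    (nxv : ¬G.Adj x v) (nxg : ¬G.Adj x g) (nyv : ¬G.Adj y v) (nyg : ¬G.Adj y g)
    (nxy : ¬G.Adj x y) (hxy : x ≠ y) (hxg : x ≠ g) (hyg : y ≠ g)
    (hax : G.Adj a x) (hay : G.Adj a y) : False := by
  have Na := deg3' h3 h4 hax hay hag hxy hxg hyg
  by_cases hbx : G.Adj b x
  · by_cases hby : G.Adj b y
    · have M := Mlem' h3 h4 huv nau nav nbu nbv nab hab
      obtain ⟨p, q, hpq, hpb, hpg, hqb, hqg, npb, npg, nqb, nqg, npq⟩ := delp' h4 hdel hbg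
      have classify : ∀ r, r ≠ g → ¬G.Adj r b → ¬G.Adj r g → r = u := by
        intro r hrg nrb nrg
        by_cases hra : G.Adj r a
        · rcases Na r hra.symm with rfl | rfl | rfl
          · exact absurd hbx.symm nrb
          · exact absurd hby.symm nrb
          · exact absurd rfl hrg
        · rcases M r hra nrb with rfl | rfl | rfl | rfl
          · rfl
          · exact absurd hvg nrg
          · exact absurd hag nrg
          · exact absurd hbg nrg
      rcases classify p hpg npb npg
      rcases classify q hqg nqb nqg
      exact absurd rfl hpq
    · exact s15x h3 h4 hadd hdel huv nau nav nbu nbv nab hab hag hbg hug hvg Ng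
        nxv nxg nyv nyg nxy hax hay Na hbx hby
  · by_cases hby : G.Adj b y
    · exact s15x h3 h4 hadd hdel huv nau nav nbu nbv nab hab hag hbg hug hvg Ng
        nyv nyg nxv nxg (fun h => nxy h.symm) hay hax
        (fun w hw => by rcases Na w hw with h | h | h <;> tauto) hby hbx
    · -- {x, b, v, y} is an independent 4-set
      have e1 : x ≠ b := fun h => by subst h; exact nab hax
      have e2 : x ≠ v := fun h => by subst h; exact nxg hvg
      have e3 : b ≠ v := fun h => by subst h; exact nbu huv.symm
      have e4 : b ≠ y := fun h => by subst h; exact nab hay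
      have e5 : v ≠ y := fun h => by subst h; exact nyg hvg
      exact ind4' h4 e1 e2 hxy e3 e4 e5
        (fun h => hbx h.symm) nxv nxy nbv hby (fun h => nyv h.symm)


/-- case: γ = u, with x adjacent to both a and b -/
lemma c1 (h3 : G.CliqueFree 3) (h4 : Gᶜ.CliqueFree 4)
    (hadd : ∀ u v : V, u ≠ v → ¬ G.Adj u v → ¬ (G ⊔ SimpleGraph.edge u v).CliqueFree 3)
    (hdel : ∀ u v : V, G.Adj u v → ¬ ((G.deleteEdges {s(u, v)})ᶜ.CliqueFree 4))
    {u v a b g x y : V}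
    (huv : G.Adj u v)
    (nau : ¬G.Adj a u) (nav : ¬G.Adj a v) (nbu : ¬G.Adj b u) (nbv : ¬G.Adj b v)
    (nab : ¬G.Adj a b) (hab : a ≠ b)
    (hag : G.Adj a g) (hbg : G.Adj b g) (hug : ¬G.Adj u g) (hvg : G.Adj v g)
    (Ng : ∀ w, G.Adj g w → w = a ∨ w = b ∨ w = v)
    (nxv : ¬G.Adj x v) (nxg : ¬G.Adj x g) (nyv : ¬G.Adj y v) (nyg : ¬G.Adj y g)
    (nxy : ¬G.Adj x y) (hxy : x ≠ y)
    (Nu : ∀ w, G.Adj u w → w = x ∨ w = y ∨ w = v)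
    (hux : G.Adj u x) (huy : G.Adj u y)
    (hax : G.Adj a x) (hbx : G.Adj b x) : False := by
  have M := Mlem' h3 h4 huv nau nav nbu nbv nab hab
  have hgx' : g ≠ x := fun h => by subst h; exact nxv hvg.symm
  have hgy' : g ≠ y := fun h => by subst h; exact nyv hvg.symm
  have hyab : G.Adj y a ∨ G.Adj y b := by
    by_contra hcon
    push_neg at hcon
    obtain ⟨h1, h2⟩ := hcon
    rcases M y h1 h2 with rfl | rfl | rfl | rfl
    · exact nyv huv
    · exact nyg hvg
    · exact nyg hag
    · exact nyg hbg
  by_cases hya : G.Adj y a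
  · have Na := deg3' h3 h4 hag hax hya.symm hgx' hgy' hxy
    by_cases hyb : G.Adj y b
    · obtain ⟨p, q, hpq, hpb, hpg, hqb, hqg, npb, npg, nqb, nqg, npq⟩ := delp' h4 hdel hbg
      have classify : ∀ r, r ≠ g → ¬G.Adj r b → ¬G.Adj r g → r = u := by
        intro r hrg nrb nrg
        by_cases hra : G.Adj r a
        · rcases Na r hra.symm with rfl | rfl | rfl
          · exact absurd rfl hrg
          · exact absurd hbx.symm nrb
          · exact absurd hyb nrb
        · rcases M r hra nrb with rfl | rfl | rfl | rfl
          · rfl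
          · exact absurd hvg nrg
          · exact absurd hag nrg
          · exact absurd hbg nrg
      rcases classify p hpg npb npg
      rcases classify q hqg nqb nqg
      exact absurd rfl hpq
    · obtain ⟨p, q, hpq, hpb, hpg, hqb, hqg, npb, npg, nqb, nqg, npq⟩ := delp' h4 hdel hbg
      have classify : ∀ r, r ≠ g → ¬G.Adj r b → ¬G.Adj r g → r = u ∨ r = y := by
        intro r hrg nrb nrg
        by_cases hra : G.Adj r a
        · rcases Na r hra.symm with rfl | rfl | rfl
          · exact absurd rfl hrg
          · exact absurd hbx.symm nrb
          · exact Or.inr rfl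
        · rcases M r hra nrb with rfl | rfl | rfl | rfl
          · exact Or.inl rfl
          · exact absurd hvg nrg
          · exact absurd hag nrg
          · exact absurd hbg nrg
      rcases classify p hpg npb npg with rfl | rfl <;>
        rcases classify q hqg nqb nqg with rfl | rfl
      · exact absurd rfl hpq
      · exact npq huy
      · exact npq huy.symm
      · exact absurd rfl hpq
  · have hyb : G.Adj y b := hyab.resolve_left hya
    have Nb := deg3' h3 h4 hbg hbx hyb.symm hgx' hgy' hxy
    obtain ⟨p, q, hpq, hpa, hpg, hqa, hqg, npa, npg, nqa, nqg, npq⟩ := delp' h4 hdel hag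
    have classify : ∀ r, r ≠ g → ¬G.Adj r a → ¬G.Adj r g → r = u ∨ r = y := by
      intro r hrg nra nrg
      by_cases hrb : G.Adj r b
      · rcases Nb r hrb.symm with rfl | rfl | rfl
        · exact absurd rfl hrg
        · exact absurd hax.symm nra
        · exact Or.inr rfl
      · rcases M r nra hrb with rfl | rfl | rfl | rfl
        · exact Or.inl rfl
        · exact absurd hvg nrg
        · exact absurd hag nrg
        · exact absurd hbg nrg
    rcases classify p hpg npa npg with rfl | rfl <;>
      rcases classify q hqg nqa nqg with rfl | rfl
    · exact absurd rfl hpq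
    · exact npq huy
    · exact npq huy.symm
    · exact absurd rfl hpq

/-- the core contradiction -/
lemma core (h3 : G.CliqueFree 3) (h4 : Gᶜ.CliqueFree 4)
    (hadd : ∀ u v : V, u ≠ v → ¬ G.Adj u v → ¬ (G ⊔ SimpleGraph.edge u v).CliqueFree 3)
    (hdel : ∀ u v : V, G.Adj u v → ¬ ((G.deleteEdges {s(u, v)})ᶜ.CliqueFree 4))
    {u v a b g : V}
    (huv : G.Adj u v)
    (nau : ¬G.Adj a u) (nav : ¬G.Adj a v) (nbu : ¬G.Adj b u) (nbv : ¬G.Adj b v)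
    (nab : ¬G.Adj a b) (hab : a ≠ b)
    (hag : G.Adj a g) (hbg : G.Adj b g) (hug : ¬G.Adj u g) : False := by
  have M := Mlem' h3 h4 huv nau nav nbu nbv nab hab
  have hug' : u ≠ g := fun h => by subst h; exact nau hag
  have hvg : G.Adj v g := by
    obtain ⟨w, huw, hgw⟩ := cn' h3 hadd hug' hug
    have nwa : ¬G.Adj w a := fun h => tri' h3 h hgw.symm hag
    have nwb : ¬G.Adj w b := fun h => tri' h3 h hgw.symm hbg
    rcases M w nwa nwb with rfl | rfl | rfl | rfl
    · exact absurd huw G.irrefl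
    · exact hgw.symm
    · exact absurd huw (fun h' => nau h'.symm)
    · exact absurd huw (fun h' => nbu h'.symm)
  have hav' : a ≠ v := fun h => by subst h; exact nau huv.symm
  have hbv' : b ≠ v := fun h => by subst h; exact nbu huv.symm
  have Ng := deg3' h3 h4 hag.symm hbg.symm hvg.symm hab hav' hbv'
  obtain ⟨x, y, hxy, hxv', hxg', hyv', hyg', nxv, nxg, nyv, nyg, nxy⟩ := delp' h4 hdel hvg
  obtain ⟨γ, hxγ, hyγ⟩ := cn' h3 hadd hxy nxy
  by_cases hγg : G.Adj γ g
  · rcases Ng γ hγg.symm with rfl | rfl | rfl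
    · exact sub15 h3 h4 hadd hdel huv nau nav nbu nbv nab hab hag hbg hug hvg Ng
        nxv nxg nyv nyg nxy hxy hxg' hyg' hxγ.symm hyγ.symm
    · exact sub15 h3 h4 hadd hdel huv nbu nbv nau nav (fun h => nab h.symm) hab.symm
        hbg hag hug hvg (fun w hw => by rcases Ng w hw with h | h | h <;> tauto)
        nxv nxg nyv nyg nxy hxy hxg' hyg' hxγ.symm hyγ.symm
    · exact nxv hxγ
  · by_cases hγv : G.Adj γ v
    · have Nγ := deg3' h3 h4 hxγ.symm hyγ.symm hγv hxy hxv' hyv'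
      have hγu : u = γ := by
        by_contra hne
        have nγa : ¬G.Adj γ a := by
          intro h
          rcases Nγ a h with h' | h' | h'
          · exact nxg (h' ▸ hag)
          · exact nyg (h' ▸ hag)
          · exact nau (by rw [h']; exact huv.symm)
        have nγb : ¬G.Adj γ b := by
          intro h
          rcases Nγ b h with h' | h' | h'
          · exact nxg (h' ▸ hbg)
          · exact nyg (h' ▸ hbg)
          · exact nbu (by rw [h']; exact huv.symm)
        rcases M γ nγa nγb with rfl | rfl | rfl | rfl
        · exact hne rfl
        · exact G.irrefl hγv
        · exact nav hγv
        · exact nbv hγv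
      subst hγu
      have hux : G.Adj u x := hxγ.symm
      have huy : G.Adj u y := hyγ.symm
      have hua' : u ≠ a := fun h => by subst h; exact nav huv
      have hub' : u ≠ b := fun h => by subst h; exact nbv huv
      obtain ⟨d1, hud1, had1⟩ := cn' h3 hadd hua' (fun h => nau h.symm)
      obtain ⟨d2, hud2, hbd2⟩ := cn' h3 hadd hub' (fun h => nbu h.symm)
      have hd1 : G.Adj a x ∨ G.Adj a y := by
        rcases Nγ d1 hud1 with rfl | rfl | rfl
        · exact Or.inl had1
        · exact Or.inr had1
        · exact absurd had1 nav
      have hd2 : G.Adj b x ∨ G.Adj b y := by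
        rcases Nγ d2 hud2 with rfl | rfl | rfl
        · exact Or.inl hbd2
        · exact Or.inr hbd2
        · exact absurd hbd2 nbv
      have Nur : ∀ w, G.Adj u w → w = y ∨ w = x ∨ w = v :=
        fun w hw => by rcases Nγ w hw with h | h | h <;> tauto
      rcases hd1 with hax | hay <;> rcases hd2 with hbx | hby
      · exact c1 h3 h4 hadd hdel huv nau nav nbu nbv nab hab hag hbg hug hvg Ng
          nxv nxg nyv nyg nxy hxy Nγ hux huy hax hbx
      · by_cases hbx : G.Adj b x
        · exact c1 h3 h4 hadd hdel huv nau nav nbu nbv nab hab hag hbg hug hvg Ng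
            nxv nxg nyv nyg nxy hxy Nγ hux huy hax hbx
        · by_cases hay : G.Adj a y
          · exact c1 h3 h4 hadd hdel huv nau nav nbu nbv nab hab hag hbg hug hvg Ng
              nyv nyg nxv nxg (fun h => nxy h.symm) hxy.symm Nur huy hux hay hby
          · exact zlem h3 h4 hadd huv nau nav nbu nbv nab hag hbg hug hvg Ng
              nyv nyg nxv nxg (fun h => nxy h.symm) Nur huy hux hax hby hay hbx
      · by_cases hax : G.Adj a x
        · exact c1 h3 h4 hadd hdel huv nau nav nbu nbv nab hab hag hbg hug hvg Ng
            nxv nxg nyv nyg nxy hxy Nγ hux huy hax hbx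
        · by_cases hby : G.Adj b y
          · exact c1 h3 h4 hadd hdel huv nau nav nbu nbv nab hab hag hbg hug hvg Ng
              nyv nyg nxv nxg (fun h => nxy h.symm) hxy.symm Nur huy hux hay hby
          · exact zlem h3 h4 hadd huv nau nav nbu nbv nab hag hbg hug hvg Ng
              nxv nxg nyv nyg nxy Nγ hux huy hay hbx hax hby
      · exact c1 h3 h4 hadd hdel huv nau nav nbu nbv nab hab hag hbg hug hvg Ng
          nyv nyg nxv nxg (fun h => nxy h.symm) hxy.symm Nur huy hux hay hby
    · have hγv' : γ ≠ v := fun h => by subst h; exact nxv hxγ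
      obtain ⟨ε, hγε, hvε⟩ := cn' h3 hadd hγv' hγv
      have nεx : ¬G.Adj ε x := fun h => tri' h3 hxγ.symm hγε h.symm
      have nεy : ¬G.Adj ε y := fun h => tri' h3 hyγ.symm hγε h.symm
      have Mvg := Mlem' h3 h4 hvg nxv nxg nyv nyg nxy hxy
      rcases Mvg ε nεx nεy with rfl | rfl | rfl | rfl
      · exact G.irrefl hvε
      · exact hγg hγε
      · exact nxv hvε.symm
      · exact nyv hvε.symm


end Aux

theorem stmt_13 : ¬ ∃ (V : Type) (_ : Fintype V) (G : SimpleGraph V),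
    DoublySaturated 3 4 G := by
  rintro ⟨V, _, G, ⟨⟨h3, h4⟩, hadd, hdel, -, hcne⟩⟩
  obtain ⟨u, v, huv⟩ : ∃ u v, G.Adj u v := by
    by_contra h
    push_neg at h
    exact hcne (by ext x y; simp [h x y])
  obtain ⟨a, b, hab, hau, hav, hbu, hbv, nau, nav, nbu, nbv, nab⟩ := delp' h4 hdel huv
  obtain ⟨g, hag, hbg⟩ := cn' h3 hadd hab nab
  by_cases hug : G.Adj u g
  · have hvgn : ¬G.Adj v g := fun h => tri' h3 huv hug h
    exact core h3 h4 hadd hdel huv.symm nav nau nbv nbu nab hab hag hbg hvgn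
  · exact core h3 h4 hadd hdel huv nau nav nbu nbv nab hab hag hbg hug
end

section
/- Suppose a 4-element clique exists in the circulant graph on ℤ/(6m+1)ℤ with connection set D = {±m, ±(5m+1)} ∪ {±d : 2m+1 ≤ d ≤ 4m} (m ≥ 2), and let g₁, g₂, g₃, g₄ be the forward cyclic gaps between consecutive clique vertices in cyclic order, so g₁+g₂+g₃+g₄ = 6m+1 with each gᵢ ∈ {m, 5m+1} ∪ [2m+1, 4m]. Then at least three of the gaps equal m, and hence two cyclically consecutive gaps equal m; since 2m is not in the difference set, no such clique exists. -/
/-!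
Each gap lies in `{m, 5m+1} ∪ [2m+1, 4m]` and the four gaps sum to `6m+1`. A gap `5m+1` leaves
`m` for three gaps of size at least `m`, and two gaps of size at least `2m+1` leave at most `2m-1`
for two gaps of size at least `m`; so at least three gaps equal `m`. Among four cyclic positions,
three always contain two consecutive ones, and two consecutive gaps `m` put two clique vertices at
difference `2m`, which is not in the connection set.
-/

open Finset

theorem Finset.exists_add_mem_of_card_lt_two_mul {G : Type*} [AddGroup G] [Fintype G]
    [DecidableEq G] (s : Finset G) (a : G) (hs : Fintype.card G < 2 * #s) :
    ∃ x ∈ s, x + a ∈ s := by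
  by_contra! h
  have hdisj : Disjoint s (s.map (Equiv.addRight a).toEmbedding) := by
    refine disjoint_left.2 fun x hx hxa => ?_
    rw [mem_map_equiv, Equiv.addRight_symm_apply] at hxa
    exact h _ hxa (by simpa using hx)
  have := card_union_of_disjoint hdisj
  rw [card_map] at this
  have := card_le_univ (s ∪ s.map (Equiv.addRight a).toEmbedding)
  omega

theorem three_le_card_filter_eq_of_sum_eq {m : ℕ} (g : Fin 4 → ℕ)
    (hg : ∀ i, g i ∈ ({m, 5 * m + 1} ∪ Set.Icc (2 * m + 1) (4 * m) : Set ℕ))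
    (hsum : g 0 + g 1 + g 2 + g 3 = 6 * m + 1) :
    3 ≤ #{i | g i = m} := by
  have h0 := hg 0; have h1 := hg 1; have h2 := hg 2; have h3 := hg 3
  simp only [Set.mem_union, Set.mem_insert_iff, Set.mem_singleton_iff, Set.mem_Icc]
    at h0 h1 h2 h3
  rw [card_filter, Fin.sum_univ_four]
  split_ifs <;> omega

theorem two_mul_notMem_connectionSet {m : ℕ} (hm : m ≠ 0) :
    2 * m ∉ ({m, 5 * m + 1} ∪ Set.Icc (2 * m + 1) (4 * m) : Set ℕ) := by
  simp only [Set.mem_union, Set.mem_insert_iff, Set.mem_singleton_iff, Set.mem_Icc]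
  omega

theorem ZMod.val_sub_eq_add_of_val_sub_eq {n : ℕ} {a b c : ZMod n} {k l : ℕ}
    (hab : (b - a).val = k) (hbc : (c - b).val = l) (hkl : k + l < n) :
    (c - a).val = k + l := by
  rw [← sub_add_sub_cancel c b a, ZMod.val_add_of_lt (by omega)]
  omega

theorem stmt_15 (m : ℕ) (hm : 2 ≤ m)
    -- the symmetric connection set D = {±m, ±(5m+1)} ∪ {±d : 2m+1 ≤ d ≤ 4m},
    -- which as a set of residues mod 6m+1 equals {m, 5m+1} ∪ [2m+1, 4m]
    (D : Set ℕ) (hD : D = {m, 5 * m + 1} ∪ Set.Icc (2 * m + 1) (4 * m))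
    (v : Fin 4 → ZMod (6 * m + 1))
    (hclique : ∀ i j : Fin 4, i ≠ j → ((v i - v j).val ∈ D))
    (g : Fin 4 → ℕ) (hg : ∀ i : Fin 4, g i = (v (i + 1) - v i).val)
    (hsum : g 0 + g 1 + g 2 + g 3 = 6 * m + 1) :
    (3 ≤ (Finset.univ.filter (fun i : Fin 4 => g i = m)).card ∧
      ∃ i : Fin 4, g i = m ∧ g (i + 1) = m) ∧ False := by
  have hgaps : ∀ i, g i ∈ D := fun i => hg i ▸ hclique (i + 1) i (by revert i; decide)
  have hthree := three_le_card_filter_eq_of_sum_eq g (hD ▸ hgaps) hsum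
  obtain ⟨i, hi, hi1⟩ := exists_add_mem_of_card_lt_two_mul {i | g i = m} 1
    (by rw [Fintype.card_fin]; omega)
  simp only [mem_filter, mem_univ, true_and] at hi hi1
  have hdiff : (v (i + 2) - v i).val = m + m := by
    refine ZMod.val_sub_eq_add_of_val_sub_eq (hg i ▸ hi) ?_ (by omega)
    rw [show i + 2 = i + 1 + 1 by rw [add_assoc]; rfl, ← hg, hi1]
  have hmem := hclique (i + 2) i ((by decide : ∀ j : Fin 4, j + 2 ≠ j) i)
  rw [hD, hdiff, ← two_mul] at hmem
  exact ⟨⟨hthree, i, hi, hi1⟩, two_mul_notMem_connectionSet (by omega) hmem⟩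
end

section
/- Let m ≥ 2 and suppose v₁, …, v_{m+2} are distinct elements of ℤ/(6m+1)ℤ with the pairwise property ‖vᵢ − vⱼ‖ ∈ [0, m−1] ∪ [m+1, 2m] for all i ≠ j (where ‖x‖ = min(x mod n, n − x mod n), n = 6m+1). Then after translating so that some vᵢ = 0, all other vⱼ lie in [1, m−1] ∪ [m+1, 2m], and among m+1 elements of this set some pair differs by exactly m — a contradiction; hence no such set of m+2 elements exists. -/
/-! Pairwise cyclic distances at most `2m < n / 3` force the points into one arc of length `2m`.
Translating its left end to `0`, the other `m + 1` points lie in `[1, 2m]`, and by pigeonhole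
two of them differ by exactly `m`, a forbidden distance. -/

lemma ZMod.exists_forall_val_sub_le_of_cyclicDist_le {ι : Type*} [Finite ι] [Nonempty ι]
    {n d : ℕ} [NeZero n] (hd : 3 * d < n) (v : ι → ZMod n)
    (hv : ∀ i j, cyclicDist n (v i - v j) ≤ d) : ∃ p, ∀ j, (v j - v p).val ≤ d := by
  obtain ⟨a⟩ := ‹Nonempty ι›
  -- Lift the points to integers in `[-d, d]` around `v a`; the lowest lift `p` is the left end
  -- of the arc, and every other point lies less than `n - d` above it, hence within `d`.
  set pos : ι → ℤ := fun j => (v j - v a).valMinAbs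
  have hpos : ∀ j, (pos j).natAbs ≤ d := fun j =>
    (ZMod.valMinAbs_natAbs_eq_min _).trans_le (hv j a)
  obtain ⟨p, hp⟩ := Finite.exists_min pos
  refine ⟨p, fun j => ?_⟩
  have hcast : v j - v p = ((pos j - pos p : ℤ) : ZMod n) := by
    simp only [pos, Int.cast_sub, ZMod.coe_valMinAbs]; ring
  have hval : ((v j - v p).val : ℤ) = pos j - pos p := by
    rw [hcast, ZMod.val_intCast, Int.emod_eq_of_lt] <;> grind
  have := hv j p
  have := hpos j
  have := hpos p
  have := hp j
  unfold cyclicDist at *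
  omega

lemma cyclicDist_sub_eq_val_sub {n : ℕ} [NeZero n] {x y : ZMod n} (hyx : y.val ≤ x.val)
    (hx : 2 * x.val < n) : cyclicDist n (x - y) = x.val - y.val := by
  unfold cyclicDist
  rw [ZMod.val_sub hyx]
  omega

lemma Finset.exists_mem_add_mem_of_subset_Icc {m : ℕ} {s : Finset ℕ}
    (hs : s ⊆ Finset.Icc 1 (2 * m)) (hcard : m < s.card) : ∃ a ∈ s, a + m ∈ s := by
  -- Pigeonhole over the `m` pairs `{r, r + m}` with `1 ≤ r ≤ m`.
  let f : ℕ → ℕ := fun a => if a ≤ m then a else a - m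
  obtain ⟨a, ha, b, hb, hab, hf⟩ := Finset.exists_ne_map_eq_of_card_lt_of_maps_to
    (t := Finset.Icc 1 m) (by simpa using hcard) (f := f) fun a ha => by
      have := Finset.mem_Icc.mp (hs ha)
      simp only [Finset.coe_Icc, Set.mem_Icc, f]
      split_ifs <;> omega
  have := Finset.mem_Icc.mp (hs ha)
  have := Finset.mem_Icc.mp (hs hb)
  simp only [f] at hf
  by_cases hba : b = a + m
  · exact ⟨a, ha, hba ▸ hb⟩
  · have hab' : a = b + m := by split_ifs at hf <;> omega
    exact ⟨b, hb, hab' ▸ ha⟩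

theorem stmt_16 (m : ℕ) (hm : 2 ≤ m) (n : ℕ) (hn : n = 6 * m + 1)
    (v : Fin (m + 2) → ZMod n) (hinj : Function.Injective v)
    (hdist : ∀ i j : Fin (m + 2), i ≠ j →
      cyclicDist n (v i - v j) ∈ Set.Icc 0 (m - 1) ∪ Set.Icc (m + 1) (2 * m)) :
    ((∃ (c : ZMod n) (i : Fin (m + 2)), v i + c = 0 ∧
        ∀ j : Fin (m + 2), j ≠ i →
          (v j + c).val ∈ Set.Icc 1 (m - 1) ∪ Set.Icc (m + 1) (2 * m)) ∧
      ∃ i j : Fin (m + 2), cyclicDist n (v i - v j) = m) ∧ False := by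
  suffices False from this.elim
  have : NeZero n := ⟨by omega⟩
  have hclose : ∀ i j, cyclicDist n (v i - v j) ≤ 2 * m := fun i j => by
    rcases eq_or_ne i j with rfl | hij
    · simp [cyclicDist]
    · have := hdist i j hij
      simp only [Set.mem_union, Set.mem_Icc] at this
      omega
  obtain ⟨p, hp⟩ := ZMod.exists_forall_val_sub_le_of_cyclicDist_le (by omega) v hclose
  set w : Fin (m + 2) → ℕ := fun j => (v j - v p).val
  have hw : Function.Injective w :=
    (ZMod.val_injective n).comp (sub_left_injective.comp hinj)
  obtain ⟨a, ha, ham⟩ := Finset.exists_mem_add_mem_of_subset_Icc (m := m)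
    (s := (Finset.univ.erase p).image w)
    (fun a ha => by
      obtain ⟨j, hj, rfl⟩ := Finset.mem_image.mp ha
      have : w j ≠ w p := hw.ne (Finset.ne_of_mem_erase hj)
      simp only [w, sub_self, ZMod.val_zero] at this
      simpa [Finset.mem_Icc] using ⟨Nat.one_le_iff_ne_zero.mpr this, hp j⟩)
    (by rw [Finset.card_image_of_injective _ hw]; simp)
  obtain ⟨j, -, rfl⟩ := Finset.mem_image.mp ha
  obtain ⟨k, -, hk⟩ := Finset.mem_image.mp ham
  have hkj : cyclicDist n (v k - v j) = m := by
    have := hp k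
    simp only [w] at hk
    rw [← sub_sub_sub_cancel_right _ _ (v p), cyclicDist_sub_eq_val_sub (by omega) (by grind)]
    omega
  have hne : k ≠ j := fun h => by subst h; omega
  have := hdist k j hne
  simp only [Set.mem_union, Set.mem_Icc] at this
  omega
end

section
/- Let m ≥ 2, n = 6m+1, and let G be the circulant graph on ℤ/nℤ with distances {m} ∪ [2m+1, 3m]. For every d ∈ [1, m−1], the set {0, d, 2m+d+1, 3m+d+1} is a clique in the graph G plus the edge {0, d}; and for every d ∈ [m+1, 2m], the set {0, d, m+d, 5m+1} is a clique in G plus the edge {0, d}. -/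
lemma cast_ne_of_lt {n a b : ℕ} (hn : 0 < n) (ha : a < n) (hb : b < n) (hab : a ≠ b) :
    (a : ZMod n) ≠ (b : ZMod n) := by
  haveI : NeZero n := ⟨hn.ne'⟩
  intro h
  have := congrArg ZMod.val h
  rw [ZMod.val_cast_of_lt ha, ZMod.val_cast_of_lt hb] at this
  exact hab this

lemma adj_circ {n : ℕ} (S : Set ℕ) {a b : ℕ} (ha : a < n) (hab : a < b) (hb : b < n)
    (hS : min (b - a) (n - (b - a)) ∈ S) :
    (circ n S).Adj (a : ZMod n) (b : ZMod n) := by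
  haveI : NeZero n := ⟨by omega⟩
  rw [circ, SimpleGraph.fromRel_adj]
  refine ⟨cast_ne_of_lt (by omega) ha hb hab.ne, Or.inr ?_⟩
  have h1 : (b : ZMod n) - a = ((b - a : ℕ) : ZMod n) := by
    rw [Nat.cast_sub hab.le]
  rw [cyclicDist, h1, ZMod.val_cast_of_lt (by omega)]
  exact hS

theorem stmt_17 (m : ℕ) (hm : 2 ≤ m) (n : ℕ) (hn : n = 6 * m + 1) :
    (∀ d : ℕ, d ∈ Set.Icc 1 (m - 1) →
      ((circ n ({m} ∪ Set.Icc (2 * m + 1) (3 * m))) ⊔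
          SimpleGraph.edge (0 : ZMod n) (d : ZMod n)).IsClique
        {(0 : ZMod n), (d : ZMod n), ((2 * m + d + 1 : ℕ) : ZMod n),
          ((3 * m + d + 1 : ℕ) : ZMod n)}) ∧
    (∀ d : ℕ, d ∈ Set.Icc (m + 1) (2 * m) →
      ((circ n ({m} ∪ Set.Icc (2 * m + 1) (3 * m))) ⊔
          SimpleGraph.edge (0 : ZMod n) (d : ZMod n)).IsClique
        {(0 : ZMod n), (d : ZMod n), ((m + d : ℕ) : ZMod n),
          ((5 * m + 1 : ℕ) : ZMod n)}) := by
  subst hn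
  set n := 6 * m + 1 with hn
  set S : Set ℕ := {m} ∪ Set.Icc (2 * m + 1) (3 * m) with hS
  have hmem : ∀ k : ℕ, (k = m ∨ (2 * m + 1 ≤ k ∧ k ≤ 3 * m)) → k ∈ S := by
    intro k hk
    simp only [hS, Set.mem_union, Set.mem_singleton_iff, Set.mem_Icc]
    tauto
  have hzero : ((0 : ZMod n)) = ((0 : ℕ) : ZMod n) := by norm_cast
  constructor
  · intro d hd
    obtain ⟨hd1, hd2⟩ := Set.mem_Icc.mp hd
    -- adjacencies
    have a01 : (SimpleGraph.edge (0 : ZMod n) (d : ZMod n)).Adj 0 d := by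
      rw [SimpleGraph.edge_adj]
      refine ⟨Or.inl ⟨rfl, rfl⟩, ?_⟩
      rw [hzero]
      exact cast_ne_of_lt (by omega) (by omega) (by omega) (by omega)
    have a02 : (circ n S).Adj ((0 : ℕ) : ZMod n) ((2 * m + d + 1 : ℕ) : ZMod n) :=
      adj_circ S (by omega) (by omega) (by omega)
        (hmem _ (by right; constructor <;> omega))
    have a03 : (circ n S).Adj ((0 : ℕ) : ZMod n) ((3 * m + d + 1 : ℕ) : ZMod n) :=
      adj_circ S (by omega) (by omega) (by omega)
        (hmem _ (by right; constructor <;> omega))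
    have a12 : (circ n S).Adj ((d : ℕ) : ZMod n) ((2 * m + d + 1 : ℕ) : ZMod n) :=
      adj_circ S (by omega) (by omega) (by omega)
        (hmem _ (by right; constructor <;> omega))
    have a13 : (circ n S).Adj ((d : ℕ) : ZMod n) ((3 * m + d + 1 : ℕ) : ZMod n) :=
      adj_circ S (by omega) (by omega) (by omega)
        (hmem _ (by right; constructor <;> omega))
    have a23 : (circ n S).Adj ((2 * m + d + 1 : ℕ) : ZMod n) ((3 * m + d + 1 : ℕ) : ZMod n) :=
      adj_circ S (by omega) (by omega) (by omega)
        (hmem _ (by left; omega))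
    intro x hx y hy hxy
    rw [hzero] at hx hy
    simp only [Set.mem_insert_iff, Set.mem_singleton_iff] at hx hy
    rcases hx with h | h | h | h <;> rcases hy with h' | h' | h' | h' <;> subst h <;> subst h' <;>
      first
      | exact absurd rfl hxy
      | exact Or.inr a01
      | exact Or.inr a01.symm
      | exact Or.inl a02 | exact Or.inl a02.symm
      | exact Or.inl a03 | exact Or.inl a03.symm
      | exact Or.inl a12 | exact Or.inl a12.symm
      | exact Or.inl a13 | exact Or.inl a13.symm
      | exact Or.inl a23 | exact Or.inl a23.symm
  · intro d hd
    obtain ⟨hd1, hd2⟩ := Set.mem_Icc.mp hd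
    have a01 : (SimpleGraph.edge (0 : ZMod n) (d : ZMod n)).Adj 0 d := by
      rw [SimpleGraph.edge_adj]
      refine ⟨Or.inl ⟨rfl, rfl⟩, ?_⟩
      rw [hzero]
      exact cast_ne_of_lt (by omega) (by omega) (by omega) (by omega)
    have a02 : (circ n S).Adj ((0 : ℕ) : ZMod n) ((m + d : ℕ) : ZMod n) :=
      adj_circ S (by omega) (by omega) (by omega)
        (hmem _ (by right; constructor <;> omega))
    have a03 : (circ n S).Adj ((0 : ℕ) : ZMod n) ((5 * m + 1 : ℕ) : ZMod n) :=
      adj_circ S (by omega) (by omega) (by omega)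
        (hmem _ (by left; omega))
    have a12 : (circ n S).Adj ((d : ℕ) : ZMod n) ((m + d : ℕ) : ZMod n) :=
      adj_circ S (by omega) (by omega) (by omega)
        (hmem _ (by left; omega))
    have a13 : (circ n S).Adj ((d : ℕ) : ZMod n) ((5 * m + 1 : ℕ) : ZMod n) :=
      adj_circ S (by omega) (by omega) (by omega)
        (hmem _ (by right; constructor <;> omega))
    have a23 : (circ n S).Adj ((m + d : ℕ) : ZMod n) ((5 * m + 1 : ℕ) : ZMod n) :=
      adj_circ S (by omega) (by omega) (by omega)
        (hmem _ (by right; constructor <;> omega))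
    intro x hx y hy hxy
    rw [hzero] at hx hy
    simp only [Set.mem_insert_iff, Set.mem_singleton_iff] at hx hy
    rcases hx with h | h | h | h <;> rcases hy with h' | h' | h' | h' <;> subst h <;> subst h' <;>
      first
      | exact absurd rfl hxy
      | exact Or.inr a01
      | exact Or.inr a01.symm
      | exact Or.inl a02 | exact Or.inl a02.symm
      | exact Or.inl a03 | exact Or.inl a03.symm
      | exact Or.inl a12 | exact Or.inl a12.symm
      | exact Or.inl a13 | exact Or.inl a13.symm
      | exact Or.inl a23 | exact Or.inl a23.symm
end
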